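/- arXiv:1907.07250 — 3 statements merged into one kernel-verified Lean document; each statement's English description precedes it below -/
import Mathlib

section
/- Let s : ℕ → ℕ be a function with s(n) → ∞ and s(n) = o(n) as n → ∞. Then there exists a constant K > 1 such that for all sufficiently large n the following holds: suppose f is an s(n)-approximately local diagonal bijection of V(Q_n), and let G = (V(Q_n), E′) where E′ = { uv ∈ E(Q_n) : f(u)f_⋆(v) ∈ E(Q_n) and f(v)f_⋆(u) ∈ E(Q_n) }. Then G has minimum degree at least n − K·s(n). -/
open MeasureTheory Filter Set Asymptotics Topology

noncomputable section

/-- Vertices of the `n`-dimensional hypercube. -/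
abbrev V (n : ℕ) : Type := Fin n → Bool

/-- The hypercube graph `Q_n`. -/
def Q (n : ℕ) : SimpleGraph (V n) :=
  SimpleGraph.fromRel (fun u v => hammingDist u v = 1)

/-- The neighbourhood of a vertex in `Q_n`. -/
def nbhd (n : ℕ) (v : V n) : Set (V n) := (Q n).neighborSet v

/-- The neighbourhood of a set of vertices. -/
def nbhdSet (n : ℕ) (A : Set (V n)) : Set (V n) := ⋃ v ∈ A, nbhd n v

/-- The set of vertices at graph distance exactly `k` from the set `A`. -/
def sphereSet (n k : ℕ) (A : Set (V n)) : Set (V n) :=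
  {w | (∃ v ∈ A, (Q n).dist v w = k) ∧ ∀ v ∈ A, k ≤ (Q n).dist v w}

/-- The ball of radius `r` about `v` (as a set of vertices). -/
def ball (n : ℕ) (v : V n) (r : ℕ) : Set (V n) := {w | (Q n).dist v w ≤ r}

/-- `χ^(r)(u) ≅ lam^(r)(w)` : the coloured `r`-balls around `u` (coloured by `χ`) and
`w` (coloured by `lam`) are isomorphic as coloured graphs. -/
def LocallyEq {C : Type} (n r : ℕ) (χ lam : V n → C) (u w : V n) : Prop :=
  ∃ φ : ((Q n).induce (ball n u r)) ≃g ((Q n).induce (ball n w r)),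
    ∀ x : ball n u r, χ x.1 = lam ((φ x).1)

/-- `d(χ^(r)(u), lam^(r)(w)) ≤ m` : some isomorphism of the `r`-balls realises at most `m`
colour disagreements. -/
def BallDistLE {C : Type} (n r : ℕ) (χ lam : V n → C) (u w : V n) (m : ℝ) : Prop :=
  ∃ φ : ((Q n).induce (ball n u r)) ≃g ((Q n).induce (ball n w r)),
    (({x : ball n u r | χ x.1 ≠ lam ((φ x).1)}.ncard : ℝ)) ≤ m

/-- A colouring is `r`-distinguishable if every `r`-locally equivalent colouring is obtained
from it by a graph automorphism. -/
def Distinguishable {C : Type} (n r : ℕ) (χ : V n → C) : Prop :=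
  ∀ lam : V n → C,
    (∃ f : V n ≃ V n, ∀ v, LocallyEq n r χ lam v (f v)) →
    ∃ g : (Q n) ≃g (Q n), lam = fun v => χ (g.symm v)

/-- `Isom^(r)(χ)` : the set of bijections `f` with `χ^(r)(v) ≅ (χ ∘ f⁻¹)^(r)(f v)` for all `v`. -/
def IsomSet {C : Type} (n r : ℕ) (χ : V n → C) : Set (V n ≃ V n) :=
  {f | ∀ v, LocallyEq n r χ (fun x => χ (f.symm x)) v (f v)}

/-- `Cluster^r_R` : bijections `h` such that `|Γ^r(h(Γ(v)))| ≤ binom(n, r+1) + R` for all `v`. -/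
def ClusterSet (n r : ℕ) (R : ℝ) : Set (V n ≃ V n) :=
  {h | ∀ v, ((sphereSet n r (⇑h '' nbhd n v)).ncard : ℝ) ≤ (n.choose (r+1) : ℝ) + R}

/-- `g` is a dual of `f` (at level `s`): `|f(Γ(v)) ∩ Γ(g(v))| ≥ n − s` for all `v`. -/
def IsDualF (n : ℕ) (s : ℝ) (f g : V n → V n) : Prop :=
  ∀ v, (n : ℝ) - s ≤ (((f '' nbhd n v) ∩ nbhd n (g v)).ncard : ℝ)

/-- `f` is `s`-approximately local: it has a dual at level `s`. -/
def ApproxLocalF (n : ℕ) (s : ℝ) (f : V n → V n) : Prop :=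
  ∃ g : V n → V n, IsDualF n s f g

/-- `Local_s` : the set of `s`-approximately local bijections. -/
def LocalSet (n : ℕ) (s : ℝ) : Set (V n ≃ V n) :=
  {f | ApproxLocalF n s ⇑f}

/-- `Mono^t_s` : bijections in `Cluster¹_s` for which, for every `v`, at most one vertex `w`
has `|f(Γ(v)) ∩ Γ(w)| > t`. -/
def MonoSet (n : ℕ) (s t : ℝ) : Set (V n ≃ V n) :=
  {f | f ∈ ClusterSet n 1 s ∧ ∀ v w₁ w₂ : V n,
      t < (((⇑f '' nbhd n v) ∩ nbhd n w₁).ncard : ℝ) →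
      t < (((⇑f '' nbhd n v) ∩ nbhd n w₂).ncard : ℝ) → w₁ = w₂}

/-- The dual `f_⋆` of `f` : for each `v`, a vertex `w` maximising `|f(Γ(v)) ∩ Γ(w)|`
(which is the unique dual vertex whenever `f` is `s`-approximately local with `s < n/2`). -/
def dualF (n : ℕ) (f : V n → V n) : V n → V n :=
  fun v => Classical.epsilon fun w =>
    ∀ w', ((f '' nbhd n v) ∩ nbhd n w').ncard ≤ ((f '' nbhd n v) ∩ nbhd n w).ncard

/-- The Bernoulli measure on `Bool`: `false` (colour 0) has probability `p`,
`true` (colour 1) has probability `1 - p`. -/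
def bern (p : ℝ) : Measure Bool :=
  ENNReal.ofReal p • Measure.dirac false + ENNReal.ofReal (1 - p) • Measure.dirac true

/-- The law of a random `(p, 1-p)`-colouring of `Q_n`: i.i.d. Bernoulli colours. -/
def colMeasure (n : ℕ) (p : ℝ) : Measure (V n → Bool) :=
  Measure.pi fun _ => bern p

/-- The uniform measure on `Fin q`. -/
def unifFin (q : ℕ) : Measure (Fin q) :=
  ((q : ENNReal))⁻¹ • Measure.count

/-- The law of a random `q`-colouring of `Q_n`: i.i.d. uniform colours. -/
def qColMeasure (n q : ℕ) : Measure (V n → Fin q) :=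
  Measure.pi fun _ => unifFin q

/-! Put `z i = f_⋆(v + eᵢ)`. For all but `s` directions `j`, `f` maps `v + eᵢ + eⱼ` into
`Γ(z i)`, so for most pairs `i ≠ j` the vertex `f(v + eᵢ + eⱼ)` is a common neighbour of the
distinct vertices `z i` and `z j`, which are then at distance exactly `2`. Distinct points of the
cube that are mostly pairwise at distance `2` mostly lie in the neighbourhood of one vertex: two
of them at distance `2` have only two common neighbours, and almost every other point is adjacent
to one of these. Hence a vertex maximising `#{i | z i ∈ Γ(c)}` is adjacent to all but `O(s)` of
the `z i`, and by diagonality `f v = f_⋆⋆ v` is such a vertex. Together with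
`f(v + eᵢ) ∈ Γ(f_⋆ v)` for all but `s` directions `i`, this bounds the degree of `v`. -/

section Flip

open Finset

variable {n : ℕ}

def flipAt (v : V n) (i : Fin n) : V n := Function.update v i (!v i)

@[simp] lemma flipAt_apply_self (v : V n) (i : Fin n) : flipAt v i i = !v i :=
  Function.update_self _ _ _

lemma flipAt_apply_of_ne (v : V n) {i j : Fin n} (h : j ≠ i) : flipAt v i j = v j :=
  Function.update_of_ne h _ _

lemma flipAt_comm (v : V n) (i j : Fin n) : flipAt (flipAt v i) j = flipAt (flipAt v j) i := by
  ext k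
  rcases eq_or_ne k i with rfl | hki <;> rcases eq_or_ne k j with rfl | hkj
  · rfl
  · rw [flipAt_apply_of_ne _ hkj, flipAt_apply_self, flipAt_apply_self, flipAt_apply_of_ne _ hkj]
  · rw [flipAt_apply_self, flipAt_apply_of_ne _ hki, flipAt_apply_of_ne _ hki, flipAt_apply_self]
  · simp only [flipAt_apply_of_ne _ hki, flipAt_apply_of_ne _ hkj]

lemma flipAt_injective (v : V n) : Function.Injective (flipAt v) := by
  intro i j h
  by_contra hij
  have := congrFun h i
  rw [flipAt_apply_self, flipAt_apply_of_ne v hij] at this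
  simp at this

lemma hammingDist_flipAt_of_eq {x y : V n} {k : Fin n} (h : x k = y k) :
    hammingDist x (flipAt y k) = hammingDist x y + 1 := by
  have hset : ({i | x i ≠ flipAt y k i} : Finset (Fin n)) =
      insert k ({i | x i ≠ y i} : Finset (Fin n)) := by
    ext i
    rcases eq_or_ne i k with rfl | hi
    · simp [h]
    · simp [hi, flipAt_apply_of_ne y hi]
  rw [hammingDist, hammingDist, hset, card_insert_of_notMem (by simp [h])]

lemma hammingDist_flipAt_of_ne {x y : V n} {k : Fin n} (h : x k ≠ y k) :
    hammingDist x (flipAt y k) + 1 = hammingDist x y := by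
  have hset : ({i | x i ≠ y i} : Finset (Fin n)) =
      insert k ({i | x i ≠ flipAt y k i} : Finset (Fin n)) := by
    ext i
    rcases eq_or_ne i k with rfl | hi
    · simp [h]
    · simp [hi, flipAt_apply_of_ne y hi]
  rw [hammingDist, hammingDist, hset, card_insert_of_notMem (by simpa using h)]

lemma hammingDist_flipAt_self (y : V n) (k : Fin n) : hammingDist y (flipAt y k) = 1 := by
  rw [hammingDist_flipAt_of_eq rfl, hammingDist_self]

lemma exists_ne_of_hammingDist_pos {x y : V n} (h : 0 < hammingDist x y) : ∃ k, x k ≠ y k :=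
  Function.ne_iff.mp (hammingDist_pos.mp h)

lemma hammingDist_eq_one_iff {x y : V n} : hammingDist x y = 1 ↔ ∃ k, x = flipAt y k := by
  constructor
  · intro h
    obtain ⟨k, hk⟩ := exists_ne_of_hammingDist_pos (h ▸ one_pos)
    have := hammingDist_flipAt_of_ne hk
    exact ⟨k, hammingDist_eq_zero.mp (by omega)⟩
  · rintro ⟨k, rfl⟩
    rw [hammingDist_comm, hammingDist_flipAt_self]

lemma hammingDist_eq_two_of_hammingDist_eq_one {x y w : V n} (hx : hammingDist x w = 1)
    (hy : hammingDist y w = 1) (hxy : x ≠ y) : hammingDist x y = 2 := by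
  obtain ⟨a, rfl⟩ := hammingDist_eq_one_iff.mp hx
  obtain ⟨b, rfl⟩ := hammingDist_eq_one_iff.mp hy
  have hab : b ≠ a := fun h => hxy (h ▸ rfl)
  rw [hammingDist_flipAt_of_eq (flipAt_apply_of_ne w hab), hammingDist_comm,
    hammingDist_flipAt_self]

lemma exists_eq_flipAt_flipAt_of_hammingDist_eq_two {a b : V n} (h : hammingDist a b = 2) :
    ∃ P Q, P ≠ Q ∧ b = flipAt (flipAt a P) Q := by
  rw [hammingDist_comm] at h
  obtain ⟨P, hP⟩ := exists_ne_of_hammingDist_pos (h ▸ two_pos)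
  have := hammingDist_flipAt_of_ne hP
  obtain ⟨Q, rfl⟩ := hammingDist_eq_one_iff.mp (by omega : hammingDist b (flipAt a P) = 1)
  refine ⟨P, Q, ?_, rfl⟩
  rintro rfl
  simp at hP

/-- `flipAt a P` and `flipAt a Q` are the two common neighbours of `a` and
`flipAt (flipAt a P) Q`. -/
lemma hammingDist_flipAt_eq_one_of_hammingDist_eq_two {x a : V n} {P Q : Fin n} (hPQ : P ≠ Q)
    (ha : hammingDist x a = 2) (hb : hammingDist x (flipAt (flipAt a P) Q) = 2) :
    hammingDist x (flipAt a P) = 1 ∨ hammingDist x (flipAt a Q) = 1 := by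
  by_cases hxP : x P = a P
  · right
    have := hammingDist_flipAt_of_eq hxP
    have hxQ : x Q ≠ a Q := by
      intro hxQ
      have := hammingDist_flipAt_of_eq (y := flipAt a P)
        (hxQ.trans (flipAt_apply_of_ne a hPQ.symm).symm)
      omega
    have := hammingDist_flipAt_of_ne hxQ
    omega
  · left
    have := hammingDist_flipAt_of_ne hxP
    omega

lemma card_filter_hammingDist_flipAt_eq_le (x y : V n) (r : ℕ) (h : hammingDist x y + 1 ≠ r) :
    #{k | hammingDist x (flipAt y k) = r} ≤ r + 1 := by
  have key : ∀ k, hammingDist x (flipAt y k) = r → x k ≠ y k ∧ hammingDist x y = r + 1 := by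
    intro k hk
    by_cases hxy : x k = y k
    · exact absurd (by rw [← hk, hammingDist_flipAt_of_eq hxy]) h
    · exact ⟨hxy, by rw [← hk, hammingDist_flipAt_of_ne hxy]⟩
  rcases Finset.eq_empty_or_nonempty {k | hammingDist x (flipAt y k) = r} with he | ⟨k, hk⟩
  · simp [he]
  · calc #{k | hammingDist x (flipAt y k) = r} ≤ #{k | x k ≠ y k} :=
          card_le_card fun j hj => by simpa using (key j (by simpa using hj)).1
      _ = r + 1 := (key k (by simpa using hk)).2

end Flip

section Neighbourhood

open Finset

variable {n : ℕ}

lemma Q_adj_iff {x y : V n} : (Q n).Adj x y ↔ hammingDist x y = 1 := by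
  rw [Q, SimpleGraph.fromRel_adj]
  refine ⟨fun ⟨_, h⟩ => h.elim id fun h => by rwa [hammingDist_comm],
    fun h => ⟨?_, Or.inl h⟩⟩
  rintro rfl
  simp at h

lemma mem_nbhd {x w : V n} : x ∈ nbhd n w ↔ hammingDist x w = 1 := by
  rw [nbhd, SimpleGraph.mem_neighborSet, Q_adj_iff, hammingDist_comm]

lemma nbhd_eq_range (v : V n) : nbhd n v = Set.range (flipAt v) := by
  ext x
  rw [mem_nbhd, hammingDist_eq_one_iff]
  exact exists_congr fun _ => eq_comm

lemma ncard_nbhd (v : V n) : (nbhd n v).ncard = n := by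
  rw [nbhd_eq_range, Set.ncard_range_of_injective (flipAt_injective v), Nat.card_eq_fintype_card,
    Fintype.card_fin]

lemma ncard_nbhd_inter_nbhd_le_two {x y : V n} (hxy : x ≠ y) :
    (nbhd n x ∩ nbhd n y).ncard ≤ 2 := by
  set K : Finset (Fin n) := {k | hammingDist y (flipAt x k) = 1}
  have hsub : nbhd n x ∩ nbhd n y ⊆ flipAt x '' K := by
    rintro _ ⟨hx, hy⟩
    rw [nbhd_eq_range] at hx
    obtain ⟨k, rfl⟩ := hx
    exact ⟨k, by simpa [K, hammingDist_comm] using mem_nbhd.mp hy, rfl⟩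
  calc (nbhd n x ∩ nbhd n y).ncard ≤ (flipAt x '' K).ncard := Set.ncard_le_ncard hsub
    _ ≤ #K := (Set.ncard_image_le (Set.toFinite _)).trans (Set.ncard_coe_finset K).le
    _ ≤ 2 := card_filter_hammingDist_flipAt_eq_le y x 1 (by simpa using hxy.symm)

lemma ncard_setOf_adj_and (v : V n) (p : V n → Prop) [DecidablePred p] :
    {u | (Q n).Adj v u ∧ p u}.ncard = #{i | p (flipAt v i)} := by
  have : {u | (Q n).Adj v u ∧ p u} = flipAt v '' ↑({i | p (flipAt v i)} : Finset _) := by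
    ext u
    have := Set.ext_iff.mp (nbhd_eq_range v) u
    simp only [nbhd, SimpleGraph.mem_neighborSet, Set.mem_range] at this
    simp only [Set.mem_ofPred_eq, this, Finset.coe_filter, Finset.mem_univ, true_and,
      Set.mem_image]
    exact ⟨fun ⟨⟨i, hi⟩, hp⟩ => ⟨i, hi ▸ hp, hi⟩,
      fun ⟨i, hp, hi⟩ => ⟨⟨i, hi⟩, hi ▸ hp⟩⟩
  rw [this, Set.ncard_image_of_injective _ (flipAt_injective v), Set.ncard_coe_finset]

lemma ncard_image_nbhd_inter_nbhd {m : ℕ} {f : V n → V m} {u : V n} (w : V m)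
    (hf : Function.Injective fun j => f (flipAt u j)) :
    (f '' nbhd n u ∩ nbhd m w).ncard = #{j | hammingDist (f (flipAt u j)) w = 1} := by
  have : f '' nbhd n u ∩ nbhd m w =
      (fun j => f (flipAt u j)) '' ↑({j | hammingDist (f (flipAt u j)) w = 1} : Finset _) := by
    ext x
    simp only [nbhd_eq_range u, Set.mem_inter_iff, Set.mem_image, Set.mem_range, mem_nbhd,
      Finset.coe_filter, Finset.mem_univ, true_and, Set.mem_ofPred_eq]
    exact ⟨fun ⟨⟨_, ⟨j, rfl⟩, hx⟩, hw⟩ => ⟨j, hx ▸ hw, hx⟩,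
      fun ⟨j, hw, hx⟩ => ⟨⟨_, ⟨j, rfl⟩, hx⟩, hx ▸ hw⟩⟩
  rw [this, Set.ncard_image_of_injective _ hf, Set.ncard_coe_finset]

end Neighbourhood

section Dual

open Finset Function

variable {n : ℕ}

lemma ncard_inter_nbhd_le_dualF (f : V n → V n) (v w : V n) :
    (f '' nbhd n v ∩ nbhd n w).ncard ≤ (f '' nbhd n v ∩ nbhd n (dualF n f v)).ncard :=
  Classical.epsilon_spec (Finite.exists_max fun c => (f '' nbhd n v ∩ nbhd n c).ncard) w

lemma IsDualF.dualF {s : ℝ} {f g : V n → V n} (hg : IsDualF n s f g) :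
    IsDualF n s f (dualF n f) :=
  fun v => (hg v).trans (by exact_mod_cast ncard_inter_nbhd_le_dualF f v (g v))

def missSet (f : V n → V n) (u w : V n) : Finset (Fin n) :=
  {j | hammingDist (f (flipAt u j)) w ≠ 1}

variable {s : ℕ} {f g : V n → V n}

lemma card_missSet_le (hf : Injective f) (hg : IsDualF n s f g) (u : V n) :
    #(missSet f u (g u)) ≤ s := by
  have hdual := hg u
  rw [ncard_image_nbhd_inter_nbhd _ (hf.comp (flipAt_injective u))] at hdual
  have hsplit := card_filter_add_card_filter_not (s := univ)
    (fun j => hammingDist (f (flipAt u j)) (g u) = 1)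
  rw [card_univ, Fintype.card_fin] at hsplit
  have : (n : ℝ) = #{j | hammingDist (f (flipAt u j)) (g u) = 1} + #(missSet f u (g u)) := by
    exact_mod_cast hsplit.symm
  exact_mod_cast (by linarith : (#(missSet f u (g u)) : ℝ) ≤ s)

/-- Two distinct neighbours of `v` share only two neighbours, so they cannot both have most of
their image inside the neighbourhood of the same vertex. -/
lemma injective_comp_flipAt_of_isDualF (hf : Injective f) (hg : IsDualF n s f g)
    (hn : 2 * s + 2 < n) (v : V n) : Injective fun i => g (flipAt v i) := by
  intro i j hij
  by_contra hne
  set X := f '' nbhd n (flipAt v i) ∩ nbhd n (g (flipAt v i))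
  set Y := f '' nbhd n (flipAt v j) ∩ nbhd n (g (flipAt v i))
  have hX : (n : ℝ) - s ≤ X.ncard := hg _
  have hY : (n : ℝ) - s ≤ Y.ncard := by simpa only [Y, hij] using hg (flipAt v j)
  have hunion : (X ∪ Y).ncard ≤ n :=
    (Set.ncard_le_ncard (Set.union_subset Set.inter_subset_right Set.inter_subset_right)).trans
      (ncard_nbhd _).le
  have hinter : (X ∩ Y).ncard ≤ 2 :=
    calc (X ∩ Y).ncard ≤ (f '' (nbhd n (flipAt v i) ∩ nbhd n (flipAt v j))).ncard :=
          Set.ncard_le_ncard (by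
            rw [Set.image_inter hf]
            exact Set.inter_subset_inter Set.inter_subset_left Set.inter_subset_left)
      _ ≤ (nbhd n (flipAt v i) ∩ nbhd n (flipAt v j)).ncard :=
          Set.ncard_image_le (Set.toFinite _)
      _ ≤ 2 := ncard_nbhd_inter_nbhd_le_two ((flipAt_injective v).ne hne)
  have := Set.ncard_union_add_ncard_inter X Y
  have : (X.ncard : ℝ) + Y.ncard ≤ n + 2 := by
    exact_mod_cast (by omega : X.ncard + Y.ncard ≤ n + 2)
  have : (n : ℝ) ≤ 2 * s + 2 := by linarith
  exact absurd hn (by exact_mod_cast this.not_gt)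

end Dual

section PointConfiguration

open Finset

variable {m : ℕ} {ι : Type*} [Fintype ι] (z : ι → V m)

def farSet (i : ι) : Finset ι := {j | hammingDist (z i) (z j) ≠ 2}

def nbrCount (w : V m) : ℕ := #{i | hammingDist (z i) w = 1}

lemma exists_card_mul_le_sum {α : Type*} {S : Finset α} (hS : S.Nonempty) (f : α → ℕ) :
    ∃ i ∈ S, #S * f i ≤ ∑ j ∈ S, f j := by
  obtain ⟨i, hi, hmin⟩ := S.exists_min_image f hS
  exact ⟨i, hi, by simpa using S.card_nsmul_le_sum f (f i) hmin⟩

/-- Take `z i₀` and `z j₁` at distance `2` with small far sets; the many points at distance `2`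
from both are adjacent to one of their two common neighbours. -/
lemma card_le_two_mul_nbrCount_add [DecidableEq ι] {t : ℕ}
    (hfar : ∑ i, #(farSet z i) ≤ Fintype.card ι * t) (ht : 2 * t < Fintype.card ι) {c : V m}
    (hc : ∀ w, nbrCount z w ≤ nbrCount z c) :
    Fintype.card ι ≤ 2 * nbrCount z c + 3 * t := by
  obtain ⟨i₀, -, hi₀⟩ := exists_card_mul_le_sum (Finset.univ_nonempty_iff.mpr
    (Fintype.card_pos_iff.mp (by omega))) fun i => #(farSet z i)
  rw [Finset.card_univ] at hi₀
  have ha : #(farSet z i₀) ≤ t := Nat.le_of_mul_le_mul_left (hi₀.trans hfar) (by omega)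
  set S := Finset.univ \ farSet z i₀
  have hS : Fintype.card ι ≤ #S + t := by rw [Finset.card_univ_sdiff]; omega
  obtain ⟨j₁, hj₁, hj₁S⟩ :=
    exists_card_mul_le_sum (Finset.card_pos.mp (by omega : 0 < #S)) fun i => #(farSet z i)
  have hb : #(farSet z j₁) ≤ 2 * t := by
    have : #S * #(farSet z j₁) ≤ Fintype.card ι * t :=
      hj₁S.trans ((Finset.sum_le_sum_of_subset (Finset.subset_univ S)).trans hfar)
    nlinarith
  have hdist : hammingDist (z i₀) (z j₁) = 2 := by simpa [S, farSet] using hj₁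
  obtain ⟨P, Q, hPQ, hj₁eq⟩ := exists_eq_flipAt_flipAt_of_hammingDist_eq_two hdist
  set NP : Finset ι := {k | hammingDist (z k) (flipAt (z i₀) P) = 1}
  set NQ : Finset ι := {k | hammingDist (z k) (flipAt (z i₀) Q) = 1}
  have hcover : Finset.univ \ (farSet z i₀ ∪ farSet z j₁) ⊆ NP ∪ NQ := by
    intro k hk
    simp only [farSet, Finset.mem_sdiff, Finset.mem_union, Finset.mem_filter, Finset.mem_univ,
      true_and, not_or, not_not] at hk
    rw [hj₁eq, hammingDist_comm, hammingDist_comm (flipAt _ _)] at hk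
    simpa [NP, NQ] using hammingDist_flipAt_eq_one_of_hammingDist_eq_two hPQ hk.1 hk.2
  have hNP : #NP ≤ nbrCount z c := hc _
  have hNQ : #NQ ≤ nbrCount z c := hc _
  have := (Finset.card_le_card hcover).trans (Finset.card_union_le NP NQ)
  have := Finset.card_union_le (farSet z i₀) (farSet z j₁)
  rw [Finset.card_univ_sdiff] at *
  omega

/-- A point not adjacent to `c` is at distance `2` from at most three neighbours of `c`. -/
lemma nbrCount_le_card_farSet_add_three [DecidableEq ι] (hz : Function.Injective z) {i : ι}
    {c : V m} (hi : hammingDist (z i) c ≠ 1) : nbrCount z c ≤ #(farSet z i) + 3 := by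
  set near : Finset ι := {j | hammingDist (z j) c = 1 ∧ hammingDist (z i) (z j) = 2}
  set K : Finset (Fin m) := {k | hammingDist (z i) (flipAt c k) = 2}
  have hsub : ({j | hammingDist (z j) c = 1} : Finset ι) ⊆ farSet z i ∪ near := by
    intro j hj
    by_cases h : hammingDist (z i) (z j) = 2
    · exact mem_union_right _ (by simp_all [near])
    · exact mem_union_left _ (by simp [farSet, h])
  have himg : near.image z ⊆ K.image (flipAt c) := by
    intro x hx
    obtain ⟨j, hj, rfl⟩ := mem_image.mp hx
    simp only [near, Finset.mem_filter, Finset.mem_univ, true_and] at hj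
    obtain ⟨k, hk⟩ := hammingDist_eq_one_iff.mp hj.1
    exact mem_image.mpr ⟨k, by simpa [K, ← hk] using hj.2, hk.symm⟩
  calc nbrCount z c ≤ #(farSet z i) + #near :=
        (Finset.card_le_card hsub).trans (Finset.card_union_le _ _)
    _ = #(farSet z i) + #(near.image z) := by rw [Finset.card_image_of_injective _ hz]
    _ ≤ #(farSet z i) + #K := by
        gcongr
        exact (Finset.card_le_card himg).trans Finset.card_image_le
    _ ≤ #(farSet z i) + 3 := by
        gcongr
        exact card_filter_hammingDist_flipAt_eq_le _ _ 2 (by omega)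

lemma card_filter_hammingDist_ne_one_le [DecidableEq ι] (hz : Function.Injective z) {t : ℕ}
    (hfar : ∑ i, #(farSet z i) ≤ Fintype.card ι * t) (ht : 3 ≤ t)
    (hN : 10 * t ≤ Fintype.card ι) {c : V m} (hc : ∀ w, nbrCount z w ≤ nbrCount z c) :
    #{i | hammingDist (z i) c ≠ 1} ≤ 4 * t := by
  set B : Finset ι := {i | hammingDist (z i) c ≠ 1}
  have hM := card_le_two_mul_nbrCount_add z hfar (by omega) hc
  have hsum : #B * nbrCount z c ≤ Fintype.card ι * t + 3 * #B :=
    calc #B * nbrCount z c = ∑ _i ∈ B, nbrCount z c := by rw [sum_const, smul_eq_mul]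
      _ ≤ ∑ i ∈ B, (#(farSet z i) + 3) :=
          sum_le_sum fun i hi => nbrCount_le_card_farSet_add_three z hz (mem_filter.mp hi).2
      _ = ∑ i ∈ B, #(farSet z i) + 3 * #B := by
          rw [sum_add_distrib, sum_const, smul_eq_mul, mul_comm]
      _ ≤ Fintype.card ι * t + 3 * #B := by
          gcongr
          exact (sum_le_sum_of_subset (Finset.subset_univ B)).trans hfar
  nlinarith

end PointConfiguration

section DualConfiguration

open Finset Function

variable {n s : ℕ} {f g : V n → V n}

/-- For `j ≠ i` with `j ∉ missSet f (flipAt v i) _` and `i ∉ missSet f (flipAt v j) _`, the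
vertex `f (flipAt (flipAt v i) j)` is a common neighbour of `g (flipAt v i)` and
`g (flipAt v j)`. -/
lemma sum_card_farSet_le (hf : Injective f) (hg : IsDualF n s f g) {v : V n}
    (hz : Injective fun i => g (flipAt v i)) :
    ∑ i, #(farSet (fun i => g (flipAt v i)) i) ≤ n * (2 * s + 1) := by
  set miss := fun i => missSet f (flipAt v i) (g (flipAt v i))
  have hsub : ∀ i, farSet (fun i => g (flipAt v i)) i ⊆
      insert i (miss i ∪ ({j | i ∈ miss j} : Finset (Fin n))) := by
    intro i j hj
    by_contra hmem
    simp only [Finset.mem_insert, Finset.mem_union, Finset.mem_filter, Finset.mem_univ, true_and,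
      not_or, miss, missSet, not_not] at hmem
    obtain ⟨hji, hi, hj'⟩ := hmem
    rw [flipAt_comm] at hj'
    simp only [farSet, Finset.mem_filter, Finset.mem_univ, true_and] at hj
    rw [hammingDist_comm] at hi hj'
    exact hj (hammingDist_eq_two_of_hammingDist_eq_one hi hj' (hz.ne (Ne.symm hji)))
  have hdouble : ∑ i, #({j | i ∈ miss j} : Finset (Fin n)) = ∑ j, #(miss j) := by
    simpa [Finset.bipartiteAbove, Finset.bipartiteBelow] using
      Finset.sum_card_bipartiteAbove_eq_sum_card_bipartiteBelow (s := Finset.univ)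
        (t := Finset.univ) (r := fun i j => i ∈ miss j)
  have hmiss : ∑ j, #(miss j) ≤ n * s := by
    simpa using Finset.sum_le_sum fun j (_ : j ∈ Finset.univ) =>
      card_missSet_le hf hg (flipAt v j)
  calc ∑ i, #(farSet (fun i => g (flipAt v i)) i)
      ≤ ∑ i, (1 + #(miss i) + #({j | i ∈ miss j} : Finset (Fin n))) :=
        Finset.sum_le_sum fun i _ => (Finset.card_le_card (hsub i)).trans <|
          (Finset.card_insert_le _ _).trans (by
            have := Finset.card_union_le (miss i) {j | i ∈ miss j}
            omega)
    _ = n + ∑ i, #(miss i) + ∑ i, #(miss i) := by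
        rw [Finset.sum_add_distrib, Finset.sum_add_distrib, hdouble]
        simp
    _ ≤ n * (2 * s + 1) := by nlinarith

lemma card_le_card_filter_and_add {α : Type*} [Fintype α] (p q : α → Prop) [DecidablePred p]
    [DecidablePred q] : Fintype.card α ≤ #{x | p x ∧ q x} + #{x | ¬p x} + #{x | ¬q x} := by
  classical
  calc Fintype.card α = #(Finset.univ : Finset α) := Finset.card_univ.symm
    _ ≤ #(({x | p x ∧ q x} : Finset α) ∪ ({x | ¬p x} : Finset α) ∪
          ({x | ¬q x} : Finset α)) :=
        Finset.card_le_card fun x _ => by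
          simp only [Finset.mem_union, Finset.mem_filter, Finset.mem_univ, true_and]
          tauto
    _ ≤ _ := (Finset.card_union_le _ _).trans (Nat.add_le_add_right (Finset.card_union_le _ _) _)

open Classical in
lemma le_card_filter_adj_dualF_add (hf : Injective f) (hs : 1 ≤ s) (hn : 30 * s ≤ n)
    (hloc : ApproxLocalF n s f) (hdiag : dualF n (dualF n f) = f) (v : V n) :
    n ≤ #{i | (Q n).Adj (f (flipAt v i)) (dualF n f v) ∧
      (Q n).Adj (f v) (dualF n f (flipAt v i))} + 13 * s := by
  obtain ⟨g, hg⟩ := hloc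
  have hdual := hg.dualF
  set z := fun i => dualF n f (flipAt v i)
  have hz : Injective z := injective_comp_flipAt_of_isDualF hf hdual (by omega) v
  have hmax : ∀ w, nbrCount z w ≤ nbrCount z (f v) := by
    intro w
    have := ncard_inter_nbhd_le_dualF (dualF n f) v w
    rwa [ncard_image_nbhd_inter_nbhd _ hz, ncard_image_nbhd_inter_nbhd _ hz,
      congrFun hdiag v] at this
  have hB := card_filter_hammingDist_ne_one_le z hz (t := 2 * s + 1)
    (by simpa using sum_card_farSet_le hf hdual hz) (by omega) (by simp; omega) hmax
  have hA := card_missSet_le hf hdual v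
  have hcount := card_le_card_filter_and_add
    (fun i => (Q n).Adj (f (flipAt v i)) (dualF n f v)) (fun i => (Q n).Adj (f v) (z i))
  simp only [Q_adj_iff, Fintype.card_fin, hammingDist_comm (f v)] at hcount ⊢
  simp only [missSet, ne_eq] at hA hB
  simp only [z] at hB hcount
  omega

end DualConfiguration

/-- Corollary 3.13 (bothways): if `f` is an `s(n)`-approximately local diagonal bijection,
the graph with edges `{uv ∈ E(Q_n) : f(u)f_⋆(v), f(v)f_⋆(u) ∈ E(Q_n)}` has minimum degree
at least `n - K s(n)`. -/
theorem diagonal_rigid_graph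
    (s : ℕ → ℕ) (hs : Tendsto s atTop atTop)
    (hso : (fun n => (s n : ℝ)) =o[atTop] fun n => (n : ℝ)) :
    ∃ K : ℝ, 1 < K ∧ ∀ᶠ n : ℕ in atTop, ∀ f : V n ≃ V n,
      ApproxLocalF n (s n) ⇑f →
      dualF n (dualF n ⇑f) = ⇑f →
      ∀ v : V n,
        (n : ℝ) - K * s n ≤
          (({u : V n | (Q n).Adj v u ∧ (Q n).Adj (f u) (dualF n ⇑f v) ∧
              (Q n).Adj (f v) (dualF n ⇑f u)}).ncard : ℝ) := by
  refine ⟨13, by norm_num, ?_⟩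
  have hsmall : ∀ᶠ n in atTop, 30 * s n ≤ n := by
    filter_upwards [hso.bound (by norm_num : (0 : ℝ) < 1 / 30)] with n hn
    simp only [Real.norm_natCast] at hn
    exact_mod_cast (by linarith : (30 * s n : ℝ) ≤ n)
  filter_upwards [hs.eventually_ge_atTop 1, hsmall] with n hs1 hsn f hloc hdiag v
  classical
  rw [ncard_setOf_adj_and, sub_le_iff_le_add]
  exact_mod_cast le_card_filter_adj_dualF_add f.injective hs1 hsn hloc hdiag v
end
end

section
/- Let s : ℕ → ℕ be a function with s(n) → ∞ and s(n) = o(n) as n → ∞. Then there exist a constant C > 0 and N ∈ ℕ such that for all n ≥ N the following holds: if f is an s(n)-approximately local bijection of V(Q_n) (so that, since s(n) < n/2, f has a unique dual f_⋆ and f_⋆ has a unique dual f_⋆⋆, both of which are bijections), and χ : V(Q_n) → {0,1} is a colouring such that f ∈ Isom^(2)(χ), then for every v ∈ V(Q_n), d(χ^(2)(v), χ^(2)(f_⋆⋆^(−1)(f(v)))) ≤ C·n·s(n). -/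
open MeasureTheory Filter Set Asymptotics Topology

noncomputable section

/-!
Write `F = f_⋆`. For directions `i ≠ j` at `u`, the vertex `flip (flip u i) j` is a common
neighbour of `flip u i` and `flip u j`, so unless it is one of the at most `s` neighbours that `f`
does not send into `Γ(F(flip u i))` (resp. `Γ(F(flip u j))`), the images `F(flip u i)` and
`F(flip u j)` have a common neighbour and are at distance two. Hence for all but `O(s)` directions,
`F(flip u i)` is at distance two from almost every other `F(flip u j)`. A large family of cube
vertices that is almost pairwise at distance two is the neighbourhood of a single vertex `c`, and
`c = f_⋆⋆ u` because `F` is then approximately local at `u` with dual `c`. Writing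
`F(flip u i) = flip c (π i)` defines a cube automorphism `e` with `e u = c` that agrees with `f`
on `B_2(u)` outside `O(n s)` vertices; composed with the isomorphism of coloured 2-balls given by
`f ∈ Isom^(2)(χ)`, it gives the bound.
-/

open scoped Finset symmDiff

section Generic

variable {α : Type*}

lemma Finset.symmDiff_singleton_of_mem [DecidableEq α] {s : Finset α} {a : α} (h : a ∈ s) :
    s ∆ {a} = s.erase a := by
  ext; simp only [Finset.mem_symmDiff, Finset.mem_singleton, Finset.mem_erase]; grind

lemma Finset.symmDiff_singleton_of_notMem [DecidableEq α] {s : Finset α} {a : α} (h : a ∉ s) :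
    s ∆ {a} = insert a s := by
  ext; simp only [Finset.mem_symmDiff, Finset.mem_singleton, Finset.mem_insert]; grind

lemma Finset.card_symmDiff_singleton_of_mem [DecidableEq α] {s : Finset α} {a : α}
    (h : a ∈ s) : #(s ∆ {a}) + 1 = #s := by
  rw [Finset.symmDiff_singleton_of_mem h, Finset.card_erase_add_one h]

lemma Finset.card_symmDiff_singleton_of_notMem [DecidableEq α] {s : Finset α} {a : α}
    (h : a ∉ s) : #(s ∆ {a}) = #s + 1 := by
  rw [Finset.symmDiff_singleton_of_notMem h, Finset.card_insert_of_notMem h]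

lemma Set.ncard_add_ncard_le_of_subset [Finite α] {A B X : Set α} (hA : A ⊆ X) (hB : B ⊆ X) :
    A.ncard + B.ncard ≤ X.ncard + (A ∩ B).ncard := by
  rw [← Set.ncard_union_add_ncard_inter A B]
  exact Nat.add_le_add_right (Set.ncard_le_ncard (Set.union_subset hA hB)) _

lemma Finset.exists_perm_eq_of_injOn [Fintype α] [DecidableEq α] {G : Finset α} {p : α → α}
    (hp : Set.InjOn p G) : ∃ π : Equiv.Perm α, ∀ i ∈ G, π i = p i := by
  obtain ⟨g, hg⟩ := Finset.exists_equiv_extend_of_card_eq (t := Finset.univ)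
    Finset.card_univ.symm (Finset.subset_univ _) hp
  exact ⟨g.trans (Equiv.subtypeUnivEquiv Finset.mem_univ), hg⟩

end Generic

namespace Hypercube

open Function

variable {n : ℕ}

def flip (x : V n) (i : Fin n) : V n := update x i (!x i)

def diffSet (x y : V n) : Finset (Fin n) := {i | x i ≠ y i}

lemma card_diffSet (x y : V n) : #(diffSet x y) = hammingDist x y := rfl

lemma mem_diffSet {x y : V n} {i : Fin n} : i ∈ diffSet x y ↔ x i ≠ y i := by
  simp [diffSet]

lemma diffSet_comm (x y : V n) : diffSet x y = diffSet y x := by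
  ext; simp [mem_diffSet, ne_comm]

lemma diffSet_symmDiff (x y z : V n) : diffSet x y ∆ diffSet y z = diffSet x z := by
  ext i
  simp only [Finset.mem_symmDiff, mem_diffSet]
  cases x i <;> cases y i <;> cases z i <;> decide

lemma eq_of_diffSet_eq {x y z : V n} (h : diffSet x y = diffSet x z) : y = z := by
  funext i
  have := congrArg (i ∈ ·) h
  simp only [mem_diffSet, eq_iff_iff] at this
  revert this
  cases x i <;> cases y i <;> cases z i <;> simp

lemma diffSet_flip (x : V n) (i : Fin n) : diffSet x (flip x i) = {i} := by
  ext j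
  by_cases h : j = i
  · subst h; simp [mem_diffSet, flip]
  · simp [mem_diffSet, flip, h]

lemma diffSet_flip_left (x y : V n) (i : Fin n) : diffSet (flip x i) y = diffSet x y ∆ {i} := by
  rw [← diffSet_symmDiff _ x, diffSet_comm, diffSet_flip, symmDiff_comm]

lemma eq_flip_of_diffSet_eq_singleton {x y : V n} {i : Fin n} (h : diffSet x y = {i}) :
    y = flip x i :=
  eq_of_diffSet_eq (h.trans (diffSet_flip x i).symm)

lemma flip_injective (x : V n) : Injective (flip x) := fun i j h =>
  Finset.singleton_injective <| by rw [← diffSet_flip, h, diffSet_flip]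

lemma flip_flip (x : V n) (i : Fin n) : flip (flip x i) i = x :=
  (eq_of_diffSet_eq (x := flip x i) <| by
    rw [diffSet_flip, diffSet_comm, diffSet_flip]).symm

lemma flip_involutive (i : Fin n) : Involutive (flip · i) := fun x => flip_flip x i

lemma diffSet_flip_flip (x : V n) {i j : Fin n} (hij : i ≠ j) :
    diffSet x (flip (flip x i) j) = {i, j} := by
  rw [diffSet_comm, diffSet_flip_left, diffSet_comm, diffSet_flip,
    Finset.symmDiff_singleton_of_notMem (by simpa using hij.symm), Finset.pair_comm]

lemma flip_comm (x : V n) (i j : Fin n) : flip (flip x i) j = flip (flip x j) i := by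
  rcases eq_or_ne i j with rfl | hij
  · rfl
  · exact eq_of_diffSet_eq (x := x) <| by
      rw [diffSet_flip_flip x hij, diffSet_flip_flip x hij.symm, Finset.pair_comm]

lemma hammingDist_flip (x : V n) (i : Fin n) : hammingDist x (flip x i) = 1 := by
  rw [← card_diffSet, diffSet_flip, Finset.card_singleton]

lemma adj_iff {x y : V n} : (Q n).Adj x y ↔ hammingDist x y = 1 := by
  rw [Q, SimpleGraph.fromRel_adj, hammingDist_comm y x, or_self, and_iff_right_iff_imp]
  rintro h rfl
  simp at h

lemma mem_nbhd_iff {x y : V n} : y ∈ nbhd n x ↔ hammingDist x y = 1 := by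
  rw [nbhd, SimpleGraph.mem_neighborSet, adj_iff]

lemma mem_nbhd_iff_exists_flip {x y : V n} : y ∈ nbhd n x ↔ ∃ i, y = flip x i := by
  rw [mem_nbhd_iff, ← card_diffSet, Finset.card_eq_one]
  exact exists_congr fun i => ⟨eq_flip_of_diffSet_eq_singleton, fun h => h ▸ diffSet_flip x i⟩

lemma flip_mem_nbhd (x : V n) (i : Fin n) : flip x i ∈ nbhd n x :=
  mem_nbhd_iff_exists_flip.2 ⟨i, rfl⟩

lemma nbhd_eq_range (x : V n) : nbhd n x = range (flip x) := by
  ext; simp [mem_nbhd_iff_exists_flip, eq_comm]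

lemma ncard_nbhd (x : V n) : (nbhd n x).ncard = n := by
  rw [nbhd_eq_range, ← image_univ, ncard_image_of_injective _ (flip_injective x), ncard_univ,
    Nat.card_eq_fintype_card, Fintype.card_fin]

lemma exists_walk_length_eq_hammingDist (x y : V n) :
    ∃ w : (Q n).Walk x y, w.length = hammingDist x y := by
  induction h : hammingDist x y generalizing x with
  | zero => obtain rfl := hammingDist_eq_zero.1 h; exact ⟨.nil, rfl⟩
  | succ k ih =>
    obtain ⟨i, hi⟩ : (diffSet x y).Nonempty := by
      rw [← Finset.card_pos, card_diffSet]; omega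
    have hk : hammingDist (flip x i) y = k := by
      have := Finset.card_symmDiff_singleton_of_mem hi
      rw [← card_diffSet, diffSet_flip_left]; rw [card_diffSet] at this; omega
    obtain ⟨w, hw⟩ := ih (flip x i) hk
    exact ⟨.cons (adj_iff.2 (hammingDist_flip x i)) w, by simp [hw]⟩

lemma hammingDist_le_length {x y : V n} (w : (Q n).Walk x y) : hammingDist x y ≤ w.length := by
  induction w with
  | nil => simp
  | @cons a b c h w ih =>
    have := hammingDist_triangle a b c
    rw [adj_iff.1 h] at this
    simp only [SimpleGraph.Walk.length_cons]; omega

lemma dist_eq_hammingDist (x y : V n) : (Q n).dist x y = hammingDist x y := by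
  obtain ⟨w, hw⟩ := exists_walk_length_eq_hammingDist x y
  obtain ⟨p, hp⟩ := SimpleGraph.Reachable.exists_walk_length_eq_dist ⟨w⟩
  exact le_antisymm (hw ▸ SimpleGraph.dist_le w) (hp ▸ hammingDist_le_length p)

lemma mem_ball_iff {x y : V n} {r : ℕ} : y ∈ ball n x r ↔ hammingDist x y ≤ r := by
  show (Q n).dist x y ≤ r ↔ _
  rw [dist_eq_hammingDist]

lemma exists_eq_flip_flip_of_hammingDist_eq_two {x y : V n} (h : hammingDist x y = 2) :
    ∃ p q, p ≠ q ∧ y = flip (flip x p) q := by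
  obtain ⟨p, q, hpq, hD⟩ := Finset.card_eq_two.1 ((card_diffSet x y).trans h)
  exact ⟨p, q, hpq, eq_of_diffSet_eq (hD.trans (diffSet_flip_flip x hpq).symm)⟩

lemma mem_diffSet_of_flip_mem_nbhd {a b : V n} {i : Fin n} (hab : a ≠ b)
    (h : flip a i ∈ nbhd n b) : i ∈ diffSet a b ∧ hammingDist a b = 2 := by
  rw [mem_nbhd_iff, hammingDist_comm, ← card_diffSet, diffSet_flip_left] at h
  by_cases hi : i ∈ diffSet a b
  · have := Finset.card_symmDiff_singleton_of_mem hi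
    exact ⟨hi, by rw [← card_diffSet]; omega⟩
  · have := Finset.card_symmDiff_singleton_of_notMem hi
    exact absurd (hammingDist_eq_zero.1 (by rw [← card_diffSet]; omega)) hab

lemma hammingDist_eq_two_of_mem_nbhd_inter {a b w : V n} (hab : a ≠ b) (ha : w ∈ nbhd n a)
    (hb : w ∈ nbhd n b) : hammingDist a b = 2 := by
  obtain ⟨i, rfl⟩ := mem_nbhd_iff_exists_flip.1 ha
  exact (mem_diffSet_of_flip_mem_nbhd hab hb).2

lemma ncard_nbhd_inter_nbhd_le {a b : V n} (hab : a ≠ b) :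
    (nbhd n a ∩ nbhd n b).ncard ≤ 2 := by
  rcases (nbhd n a ∩ nbhd n b).eq_empty_or_nonempty with h | ⟨w, hwa, hwb⟩
  · simp [h]
  have hsub : nbhd n a ∩ nbhd n b ⊆ flip a '' ↑(diffSet a b) := by
    rintro w ⟨hwa, hwb⟩
    obtain ⟨i, rfl⟩ := mem_nbhd_iff_exists_flip.1 hwa
    exact ⟨i, (mem_diffSet_of_flip_mem_nbhd hab hwb).1, rfl⟩
  calc (nbhd n a ∩ nbhd n b).ncard ≤ (flip a '' ↑(diffSet a b)).ncard := ncard_le_ncard hsub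
    _ ≤ #(diffSet a b) := (ncard_image_le (Finset.finite_toSet _)).trans (ncard_coe_finset _).le
    _ = 2 := hammingDist_eq_two_of_mem_nbhd_inter hab hwa hwb

lemma eq_or_eq_of_mem_nbhd_flip_inter {c w : V n} {a b : Fin n} (hab : a ≠ b)
    (ha : w ∈ nbhd n (flip c a)) (hb : w ∈ nbhd n (flip c b)) :
    w = c ∨ w = flip (flip c a) b := by
  have hne : flip c a ≠ flip c b := (flip_injective c).ne hab
  obtain ⟨i, rfl⟩ := mem_nbhd_iff_exists_flip.1 ha
  have hi := (mem_diffSet_of_flip_mem_nbhd hne hb).1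
  rw [diffSet_flip_left, diffSet_flip, Finset.symmDiff_singleton_of_notMem (by simpa using hab),
    Finset.mem_insert, Finset.mem_singleton] at hi
  rcases hi with rfl | rfl
  · exact .inl (flip_flip c i)
  · exact .inr rfl

lemma hammingDist_flip_flip_of_disjoint (x : V n) {a b c d : Fin n} (hab : a ≠ b) (hcd : c ≠ d)
    (h : Disjoint ({a, b} : Finset (Fin n)) {c, d}) :
    hammingDist (flip (flip x a) b) (flip (flip x c) d) = 4 := by
  rw [← card_diffSet, ← diffSet_symmDiff _ x, diffSet_comm, diffSet_flip_flip x hab,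
    diffSet_flip_flip x hcd, h.symmDiff_eq_sup, Finset.sup_eq_union,
    Finset.card_union_of_disjoint h, Finset.card_pair hab, Finset.card_pair hcd]

lemma mem_nbhd_flip_or_of_hammingDist_eq_two {x z : V n} {p q : Fin n} (hpq : p ≠ q)
    (hxz : hammingDist x z = 2) (hyz : hammingDist (flip (flip x p) q) z = 2) :
    z ∈ nbhd n (flip x p) ∨ z ∈ nbhd n (flip x q) := by
  obtain ⟨a, b, hab, rfl⟩ := exists_eq_flip_flip_of_hammingDist_eq_two hxz
  have hmem : ∀ r, r = a ∨ r = b → flip (flip x a) b ∈ nbhd n (flip x r) := by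
    rintro r (rfl | rfl)
    · exact flip_mem_nbhd _ _
    · rw [flip_comm]; exact flip_mem_nbhd _ _
  by_contra! h
  have hdisj : Disjoint ({p, q} : Finset (Fin n)) {a, b} := by
    simp only [Finset.disjoint_insert_left, Finset.disjoint_singleton_left, Finset.mem_insert,
      Finset.mem_singleton]
    exact ⟨fun hp => h.1 (hmem p hp), fun hq => h.2 (hmem q hq)⟩
  rw [hammingDist_flip_flip_of_disjoint x hpq hab hdisj] at hyz
  omega

lemma eq_flip_flip_of_hammingDist_eq_two {x z w : V n} {p q : Fin n} (hpq : p ≠ q)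
    (hz : z ∈ nbhd n (flip x p)) (hw : w ∈ nbhd n (flip x q)) (hzx : z ≠ x)
    (hzy : z ≠ flip (flip x p) q) (hwx : w ≠ x) (hwy : w ≠ flip (flip x p) q)
    (hzw : hammingDist z w = 2) : w = flip (flip z p) q := by
  obtain ⟨r, rfl⟩ := mem_nbhd_iff_exists_flip.1 hz
  obtain ⟨t, rfl⟩ := mem_nbhd_iff_exists_flip.1 hw
  have hrp : r ≠ p := by rintro rfl; exact hzx (flip_flip x r)
  have hrq : r ≠ q := by rintro rfl; exact hzy rfl
  have htq : t ≠ q := by rintro rfl; exact hwx (flip_flip x t)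
  have htp : t ≠ p := by rintro rfl; exact hwy (flip_comm x q t)
  obtain rfl : r = t := by
    by_contra hrt
    have hdisj : Disjoint ({p, r} : Finset (Fin n)) {q, t} := by
      simp only [Finset.disjoint_insert_left, Finset.disjoint_singleton_left, Finset.mem_insert,
        Finset.mem_singleton]
      tauto
    rw [hammingDist_flip_flip_of_disjoint x hrp.symm htq.symm hdisj] at hzw
    omega
  rw [flip_comm _ r p, flip_flip, flip_comm]

lemma mem_nbhd_of_four_le_card {c x : V n} {W : Finset (V n)} (hWc : ∀ y ∈ W, y ∈ nbhd n c)
    (hWx : ∀ y ∈ W, hammingDist x y = 2) (hW : 4 ≤ #W) : x ∈ nbhd n c := by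
  by_contra hx
  have key : ∀ y ∈ W, ∃ t ∈ diffSet c x, flip c t = y ∧ hammingDist c x = 3 := by
    intro y hy
    obtain ⟨t, rfl⟩ := mem_nbhd_iff_exists_flip.1 (hWc y hy)
    have h2 := hWx _ hy
    rw [hammingDist_comm, ← card_diffSet, diffSet_flip_left] at h2
    by_cases ht : t ∈ diffSet c x
    · have := Finset.card_symmDiff_singleton_of_mem ht
      exact ⟨t, ht, rfl, by rw [← card_diffSet]; omega⟩
    · have := Finset.card_symmDiff_singleton_of_notMem ht
      exact absurd (mem_nbhd_iff.2 (by rw [← card_diffSet]; omega)) hx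
  obtain ⟨y, hy⟩ := Finset.card_pos.1 (by omega : 0 < #W)
  have hsub : W ⊆ (diffSet c x).image (flip c) := fun y hy =>
    let ⟨t, ht, hty, _⟩ := key y hy
    Finset.mem_image.2 ⟨t, ht, hty⟩
  have := (Finset.card_le_card hsub).trans Finset.card_image_le
  rw [card_diffSet, (key y hy).choose_spec.2.2] at this
  omega

def farFrom (S : Finset (V n)) (x : V n) : Finset (V n) := {y ∈ S | hammingDist x y ≠ 2}

lemma hammingDist_eq_two_of_notMem_farFrom {S : Finset (V n)} {x y : V n} (hy : y ∈ S)
    (hyx : y ∉ farFrom S x) : hammingDist x y = 2 :=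
  not_not.1 fun h => hyx (Finset.mem_filter.2 ⟨hy, h⟩)

lemma forall_mem_nbhd_of_subset {S W : Finset (V n)} {c : V n} {d : ℕ}
    (hd : ∀ x ∈ S, #(farFrom S x) ≤ d) (hWS : W ⊆ S) (hWc : ∀ y ∈ W, y ∈ nbhd n c)
    (hW : d + 4 ≤ #W) : ∀ x ∈ S, x ∈ nbhd n c := by
  intro x hx
  refine mem_nbhd_of_four_le_card (W := W \ farFrom S x)
    (fun y hy => hWc y (Finset.mem_sdiff.1 hy).1) (fun y hy => ?_) ?_
  · obtain ⟨hyW, hyx⟩ := Finset.mem_sdiff.1 hy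
    exact hammingDist_eq_two_of_notMem_farFrom (hWS hyW) hyx
  · have := Finset.le_card_sdiff (farFrom S x) W
    have := hd x hx
    omega

/-- If two members `z₁ ≠ z₂` of `T` are adjacent to `flip x p`, every member adjacent to
`flip x q` is far from `z₁` or `z₂`; so one of the two sides is almost all of `T`. -/
lemma exists_subset_nbhd_of_forall_hammingDist_eq_two {S T : Finset (V n)} {d : ℕ}
    (hd1 : 1 ≤ d) (hd : ∀ z ∈ S, #(farFrom S z) ≤ d) (hTS : T ⊆ S) {x : V n} {p q : Fin n}
    (hpq : p ≠ q)
    (hT : ∀ z ∈ T, hammingDist x z = 2 ∧ hammingDist (flip (flip x p) q) z = 2) :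
    ∃ c, ∃ W ⊆ T, (∀ w ∈ W, w ∈ nbhd n c) ∧ #T ≤ #W + 2 * d := by
  classical
  have hne : ∀ {a b : V n}, hammingDist a b = 2 → b ≠ a := by rintro a b h rfl; simp at h
  set TP := T.filter (· ∈ nbhd n (flip x p))
  set TQ := T.filter (· ∉ nbhd n (flip x p))
  have hcard : #TP + #TQ = #T := Finset.card_filter_add_card_filter_not _
  have hTQ : ∀ w ∈ TQ, w ∈ T ∧ w ∈ nbhd n (flip x q) := fun w hw => by
    obtain ⟨hwT, hwp⟩ := Finset.mem_filter.1 hw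
    exact ⟨hwT,
      (mem_nbhd_flip_or_of_hammingDist_eq_two hpq (hT w hwT).1 (hT w hwT).2).resolve_left hwp⟩
  by_cases h2 : 1 < #TP
  · obtain ⟨z₁, hz₁, z₂, hz₂, hz⟩ := Finset.one_lt_card.1 h2
    obtain ⟨hz₁T, hz₁p⟩ := Finset.mem_filter.1 hz₁
    obtain ⟨hz₂T, hz₂p⟩ := Finset.mem_filter.1 hz₂
    have hTQ_far : TQ ⊆ farFrom S z₁ ∪ farFrom S z₂ := by
      intro w hw
      obtain ⟨hwT, hwq⟩ := hTQ w hw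
      have hw_eq : ∀ z ∈ T, z ∈ nbhd n (flip x p) → w ∉ farFrom S z →
          w = flip (flip z p) q := fun z hzT hzp hwz =>
        eq_flip_flip_of_hammingDist_eq_two hpq hzp hwq (hne (hT z hzT).1) (hne (hT z hzT).2)
          (hne (hT w hwT).1) (hne (hT w hwT).2)
          (hammingDist_eq_two_of_notMem_farFrom (hTS hwT) hwz)
      by_contra h
      rw [Finset.mem_union, not_or] at h
      exact hz <| (flip_involutive p).injective <| (flip_involutive q).injective <|
        (hw_eq z₁ hz₁T hz₁p h.1).symm.trans (hw_eq z₂ hz₂T hz₂p h.2)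
    refine ⟨flip x p, TP, Finset.filter_subset _ _, fun z hz => (Finset.mem_filter.1 hz).2, ?_⟩
    have := (Finset.card_le_card hTQ_far).trans (Finset.card_union_le _ _)
    have := hd z₁ (hTS hz₁T)
    have := hd z₂ (hTS hz₂T)
    omega
  · exact ⟨flip x q, TQ, Finset.filter_subset _ _, fun w hw => (hTQ w hw).2, by omega⟩

theorem exists_forall_mem_nbhd_of_card_farFrom_le {S : Finset (V n)} {d : ℕ}
    (hd : ∀ x ∈ S, #(farFrom S x) ≤ d) (hS : 5 * d + 4 ≤ #S) :
    ∃ c, ∀ x ∈ S, x ∈ nbhd n c := by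
  obtain ⟨x, hx⟩ : S.Nonempty := Finset.card_pos.1 (by omega)
  have hd1 : 1 ≤ d :=
    (Finset.card_pos.2 ⟨x, Finset.mem_filter.2 ⟨hx, by simp⟩⟩).trans_le (hd x hx)
  have hSx := Finset.le_card_sdiff (farFrom S x) S
  obtain ⟨y, hy⟩ : (S \ farFrom S x).Nonempty := Finset.card_pos.1 (by have := hd x hx; omega)
  obtain ⟨hyS, hyx⟩ := Finset.mem_sdiff.1 hy
  obtain ⟨p, q, hpq, rfl⟩ :=
    exists_eq_flip_flip_of_hammingDist_eq_two (hammingDist_eq_two_of_notMem_farFrom hyS hyx)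
  set T := S \ (farFrom S x ∪ farFrom S (flip (flip x p) q))
  have hTS : T ⊆ S := Finset.sdiff_subset
  obtain ⟨c, W, hWT, hWc, hW⟩ :=
    exists_subset_nbhd_of_forall_hammingDist_eq_two hd1 hd hTS hpq fun z hz => by
      obtain ⟨hzS, hzf⟩ := Finset.mem_sdiff.1 hz
      rw [Finset.mem_union, not_or] at hzf
      exact ⟨hammingDist_eq_two_of_notMem_farFrom hzS hzf.1,
        hammingDist_eq_two_of_notMem_farFrom hzS hzf.2⟩
  refine ⟨c, forall_mem_nbhd_of_subset hd (hWT.trans hTS) hWc ?_⟩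
  have : #S - #(farFrom S x ∪ farFrom S (flip (flip x p) q)) ≤ #T := Finset.le_card_sdiff _ _
  have := Finset.card_union_le (farFrom S x) (farFrom S (flip (flip x p) q))
  have := hd x hx
  have := hd _ hyS
  omega

def overlap (f : V n → V n) (v w : V n) : ℕ := ((f '' nbhd n v) ∩ nbhd n w).ncard

def strayNbrs (f : V n → V n) (y : V n) : Set (V n) :=
  {w ∈ nbhd n y | f w ∉ nbhd n (dualF n f y)}

section Dual

variable {f : V n → V n}

variable (f) in
lemma overlap_le_overlap_dualF (v w : V n) : overlap f v w ≤ overlap f v (dualF n f v) := by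
  obtain ⟨w₀, hw₀⟩ := Finite.exists_max (overlap f v)
  exact Classical.epsilon_spec (p := fun w => ∀ w', overlap f v w' ≤ overlap f v w)
    ⟨w₀, hw₀⟩ w

lemma le_overlap_dualF_add {s : ℕ} (h : ApproxLocalF n s f) (v : V n) :
    n ≤ overlap f v (dualF n f v) + s := by
  obtain ⟨g, hg⟩ := h
  have hgv : n ≤ overlap f v (g v) + s := by
    have := hg v
    exact_mod_cast (by unfold overlap; linarith : (n : ℝ) ≤ overlap f v (g v) + s)
  exact hgv.trans (Nat.add_le_add_right (overlap_le_overlap_dualF f v (g v)) s)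

lemma eq_of_le_overlap_add (hf : Injective f) {v w w' : V n} {t : ℕ}
    (h : n ≤ overlap f v w + t) (h' : n ≤ overlap f v w' + t) (ht : 2 * t + 2 < n) :
    w = w' := by
  by_contra hne
  have hsum := ncard_add_ncard_le_of_subset (X := f '' nbhd n v)
    (inter_subset_left (t := nbhd n w)) (inter_subset_left (t := nbhd n w'))
  have hinter : ((f '' nbhd n v ∩ nbhd n w) ∩ (f '' nbhd n v ∩ nbhd n w')).ncard ≤ 2 :=
    (ncard_le_ncard (inter_subset_inter inter_subset_right inter_subset_right)).trans
      (ncard_nbhd_inter_nbhd_le hne)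
  rw [ncard_image_of_injective _ hf, ncard_nbhd] at hsum
  unfold overlap at h h'
  omega

variable {s : ℕ}

lemma dualF_injective (hf : Injective f) (hdual : ∀ v, n ≤ overlap f v (dualF n f v) + s)
    (hs : 2 * s + 2 < n) : Injective (dualF n f) := by
  intro v v' hvv'
  by_contra hne
  have hsum := ncard_add_ncard_le_of_subset (X := nbhd n (dualF n f v))
    (inter_subset_right (s := f '' nbhd n v)) (inter_subset_right (s := f '' nbhd n v'))
  have hinter : ((f '' nbhd n v ∩ nbhd n (dualF n f v)) ∩
      (f '' nbhd n v' ∩ nbhd n (dualF n f v))).ncard ≤ 2 := by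
    refine (ncard_le_ncard (inter_subset_inter inter_subset_left inter_subset_left)).trans ?_
    rw [← image_inter hf]
    exact (ncard_image_le (toFinite _)).trans (ncard_nbhd_inter_nbhd_le hne)
  have hv := hdual v
  have hv' := hdual v'
  rw [← hvv'] at hv'
  rw [ncard_nbhd] at hsum
  unfold overlap at hv hv'
  omega

lemma ncard_strayNbrs_le (hf : Injective f) (hdual : ∀ v, n ≤ overlap f v (dualF n f v) + s)
    (y : V n) : (strayNbrs f y).ncard ≤ s := by
  have hsub : strayNbrs f y ⊆ nbhd n y := sep_subset _ _
  have himg : f '' nbhd n y ∩ nbhd n (dualF n f y) = f '' (nbhd n y \ strayNbrs f y) := by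
    ext x
    constructor
    · rintro ⟨⟨w, hw, rfl⟩, hx⟩
      exact ⟨w, ⟨hw, fun h => h.2 hx⟩, rfl⟩
    · rintro ⟨w, ⟨hw, hws⟩, rfl⟩
      exact ⟨⟨w, hw, rfl⟩, not_not.1 fun h => hws ⟨hw, h⟩⟩
  have hy := hdual y
  have hle := ncard_le_ncard hsub
  rw [overlap, himg, ncard_image_of_injective _ hf, ncard_sdiff hsub, ncard_nbhd] at hy
  rw [ncard_nbhd] at hle
  omega

lemma apply_mem_nbhd_dualF {y w : V n} (hw : w ∈ nbhd n y) (hws : w ∉ strayNbrs f y) :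
    f w ∈ nbhd n (dualF n f y) :=
  not_not.1 fun h => hws ⟨hw, h⟩

end Dual

section GoodCoords

open scoped Classical

variable {f : V n → V n}

lemma hammingDist_dualF_flip_eq_two (hF : Injective (dualF n f)) {u : V n} {i j : Fin n}
    (hij : i ≠ j) (hi : flip (flip u i) j ∉ strayNbrs f (flip u i))
    (hj : flip (flip u j) i ∉ strayNbrs f (flip u j)) :
    hammingDist (dualF n f (flip u i)) (dualF n f (flip u j)) = 2 :=
  hammingDist_eq_two_of_mem_nbhd_inter (hF.ne ((flip_injective u).ne hij))
    (apply_mem_nbhd_dualF (flip_mem_nbhd _ _) hi)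
    (flip_comm u i j ▸ apply_mem_nbhd_dualF (flip_mem_nbhd _ _) hj)

lemma card_filter_flip_mem_le (y : V n) (A : Set (V n)) : #{j | flip y j ∈ A} ≤ A.ncard := by
  rw [← ncard_coe_finset, ← ncard_image_of_injective _ (flip_injective y)]
  exact ncard_le_ncard (by rintro _ ⟨j, hj, rfl⟩; simpa using hj)

variable (f) in
def farCoords (u : V n) (i : Fin n) : Finset (Fin n) :=
  {j | hammingDist (dualF n f (flip u i)) (dualF n f (flip u j)) ≠ 2}

variable (f) in
-- With `d = n / 16`, the `5 d + 4` members needed by `exists_forall_mem_nbhd_of_card_farFrom_le`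
-- fit into the `n - O(s)` good directions.
def goodCoords (u : V n) : Finset (Fin n) := {i | 16 * #(farCoords f u i) ≤ n}

variable {s : ℕ}

lemma sum_card_farCoords_le (hf : Injective f) (hdual : ∀ v, n ≤ overlap f v (dualF n f v) + s)
    (hF : Injective (dualF n f)) (u : V n) :
    ∑ i, #(farCoords f u i) ≤ n * (2 * s + 1) := by
  set stray : Fin n → Fin n → Prop := fun i j => flip (flip u i) j ∈ strayNbrs f (flip u i)
  have hstray : ∀ i, #{j | stray i j} ≤ s := fun i =>
    (card_filter_flip_mem_le _ _).trans (ncard_strayNbrs_le hf hdual _)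
  have hsub : ∀ i, farCoords f u i ⊆
      insert i (({j | stray i j} : Finset (Fin n)) ∪ ({j | stray j i} : Finset (Fin n))) := by
    intro i j hj
    simp only [farCoords, Finset.mem_filter, Finset.mem_univ, true_and] at hj
    by_contra h
    simp only [Finset.mem_insert, Finset.mem_union, Finset.mem_filter, Finset.mem_univ, true_and,
      not_or, stray] at h
    exact hj (hammingDist_dualF_flip_eq_two hF (Ne.symm h.1) h.2.1 h.2.2)
  have hswap : ∑ i, #{j | stray j i} = ∑ j, #{i | stray j i} := by
    simp only [Finset.card_filter]
    exact Finset.sum_comm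
  calc ∑ i, #(farCoords f u i) ≤ ∑ i, (1 + #{j | stray i j} + #{j | stray j i}) := by
        gcongr with i
        refine (Finset.card_le_card (hsub i)).trans ((Finset.card_insert_le _ _).trans ?_)
        have := Finset.card_union_le {j | stray i j} {j | stray j i}
        omega
    _ ≤ ∑ i : Fin n, (1 + s) + ∑ j : Fin n, s := by
        rw [Finset.sum_add_distrib, hswap]
        gcongr with i _ j
        exacts [hstray i, hstray j]
    _ = n * (2 * s + 1) := by simp; ring

lemma card_goodCoords (hf : Injective f) (hdual : ∀ v, n ≤ overlap f v (dualF n f v) + s)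
    (hF : Injective (dualF n f)) (u : V n) :
    n ≤ #(goodCoords f u) + 32 * s + 16 := by
  rcases Nat.eq_zero_or_pos n with rfl | hn
  · omega
  set B : Finset (Fin n) := {i | ¬16 * #(farCoords f u i) ≤ n}
  have hsplit : #(goodCoords f u) + #B = n := by
    rw [goodCoords, Finset.card_filter_add_card_filter_not, Finset.card_univ, Fintype.card_fin]
  have hB : #B * n ≤ 16 * (2 * s + 1) * n :=
    calc #B * n ≤ ∑ i ∈ B, 16 * #(farCoords f u i) := by
          simpa using Finset.card_nsmul_le_sum B _ n fun i hi => by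
            have := (Finset.mem_filter.1 hi).2; omega
      _ ≤ ∑ i, 16 * #(farCoords f u i) := Finset.sum_le_sum_of_subset (Finset.subset_univ _)
      _ ≤ 16 * (2 * s + 1) * n := by
          rw [← Finset.mul_sum]
          have := sum_card_farCoords_le hf hdual hF u
          nlinarith
  have := Nat.le_of_mul_le_mul_right hB hn
  omega

lemma exists_forall_dualF_flip_mem_nbhd (hF : Injective (dualF n f)) (u : V n)
    (hG : 5 * (n / 16) + 4 ≤ #(goodCoords f u)) :
    ∃ c, ∀ i ∈ goodCoords f u, dualF n f (flip u i) ∈ nbhd n c := by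
  set a := fun i => dualF n f (flip u i)
  have ha : Injective a := hF.comp (flip_injective u)
  set S := (goodCoords f u).image a
  have hfar : ∀ x ∈ S, #(farFrom S x) ≤ n / 16 := by
    simp only [S, Finset.forall_mem_image]
    intro i hi
    have hsub : farFrom S (a i) ⊆ (farCoords f u i).image a := by
      intro y hy
      obtain ⟨hyS, hy2⟩ := Finset.mem_filter.1 hy
      obtain ⟨j, -, rfl⟩ := Finset.mem_image.1 hyS
      exact Finset.mem_image_of_mem a (Finset.mem_filter.2 ⟨Finset.mem_univ _, hy2⟩)
    refine (Finset.card_le_card hsub).trans (Finset.card_image_le.trans ?_)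
    have := (Finset.mem_filter.1 hi).2
    omega
  obtain ⟨c, hc⟩ := exists_forall_mem_nbhd_of_card_farFrom_le hfar
    (by rwa [Finset.card_image_of_injective _ ha])
  exact ⟨c, fun i hi => hc _ (Finset.mem_image_of_mem a hi)⟩

lemma dualF_dualF_eq_of_forall_mem_nbhd (hF : Injective (dualF n f)) {u c : V n}
    {G : Finset (Fin n)} {t : ℕ} (hc : ∀ i ∈ G, dualF n f (flip u i) ∈ nbhd n c)
    (hG : n ≤ #G + t) (ht : 2 * t + 2 < n) : dualF n (dualF n f) u = c := by
  have hcu : n ≤ overlap (dualF n f) u c + t := by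
    have hsub : (dualF n f ∘ flip u) '' ↑G ⊆ dualF n f '' nbhd n u ∩ nbhd n c := by
      rintro _ ⟨i, hi, rfl⟩
      exact ⟨⟨_, flip_mem_nbhd u i, rfl⟩, hc i hi⟩
    have := ncard_le_ncard hsub
    rw [ncard_image_of_injective _ (hF.comp (flip_injective u)), ncard_coe_finset] at this
    unfold overlap
    omega
  exact eq_of_le_overlap_add hF
    (hcu.trans (Nat.add_le_add_right (overlap_le_overlap_dualF _ u c) t)) hcu ht

theorem exists_perm_dualF_flip_eq (hf : Injective f)
    (hdual : ∀ v, n ≤ overlap f v (dualF n f v) + s) (hs : 1 ≤ s) (hsn : 100 * s ≤ n) (u : V n) :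
    ∃ π : Equiv.Perm (Fin n), ∀ i ∈ goodCoords f u,
      dualF n f (flip u i) = flip (dualF n (dualF n f) u) (π i) := by
  have hF := dualF_injective hf hdual (by omega)
  have hG := card_goodCoords hf hdual hF u
  obtain ⟨c, hc⟩ := exists_forall_dualF_flip_mem_nbhd hF u (by omega)
  obtain rfl := dualF_dualF_eq_of_forall_mem_nbhd hF hc (t := 32 * s + 16) (by omega) (by omega)
  choose! p hp using fun i hi => mem_nbhd_iff_exists_flip.1 (hc i hi)
  obtain ⟨π, hπ⟩ := Finset.exists_perm_eq_of_injOn (p := p) fun i hi j hj hij =>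
    (hF.comp (flip_injective u)) ((hp i hi).trans (hij ▸ (hp j hj).symm))
  exact ⟨π, fun i hi => (hp i hi).trans (by rw [hπ i hi])⟩

end GoodCoords

def cubeEquiv (u c : V n) (π : Equiv.Perm (Fin n)) : V n ≃ V n where
  toFun x j := xor (c j) (xor (x (π.symm j)) (u (π.symm j)))
  invFun y i := xor (u i) (xor (y (π i)) (c (π i)))
  left_inv x := by
    funext i
    simp only [Equiv.symm_apply_apply]
    cases x i <;> cases u i <;> cases c (π i) <;> rfl
  right_inv y := by
    funext j
    simp only [Equiv.apply_symm_apply]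
    cases y j <;> cases c j <;> cases u (π.symm j) <;> rfl

lemma diffSet_cubeEquiv (u c : V n) (π : Equiv.Perm (Fin n)) (x y : V n) :
    diffSet (cubeEquiv u c π x) (cubeEquiv u c π y) = (diffSet x y).map π.toEmbedding := by
  ext j
  obtain ⟨i, rfl⟩ := π.surjective j
  simp [mem_diffSet, cubeEquiv]

lemma hammingDist_cubeEquiv (u c : V n) (π : Equiv.Perm (Fin n)) (x y : V n) :
    hammingDist (cubeEquiv u c π x) (cubeEquiv u c π y) = hammingDist x y := by
  rw [← card_diffSet, diffSet_cubeEquiv, Finset.card_map, card_diffSet]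

lemma cubeEquiv_self (u c : V n) (π : Equiv.Perm (Fin n)) : cubeEquiv u c π u = c := by
  funext j; simp [cubeEquiv]

lemma cubeEquiv_flip (u c : V n) (π : Equiv.Perm (Fin n)) (x : V n) (i : Fin n) :
    cubeEquiv u c π (flip x i) = flip (cubeEquiv u c π x) (π i) :=
  eq_flip_of_diffSet_eq_singleton <| by simp [diffSet_cubeEquiv, diffSet_flip]

lemma eq_or_mem_nbhd_or_eq_flip_flip {u w : V n} (h : hammingDist u w ≤ 2) :
    w = u ∨ w ∈ nbhd n u ∨ ∃ i j, i ≠ j ∧ w = flip (flip u i) j := by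
  interval_cases hd : hammingDist u w
  · exact .inl (hammingDist_eq_zero.1 hd).symm
  · exact .inr (.inl (mem_nbhd_iff.2 hd))
  · exact .inr (.inr (exists_eq_flip_flip_of_hammingDist_eq_two hd))

section Mismatch

variable {f : V n → V n} {u : V n} {G : Finset (Fin n)} {π : Equiv.Perm (Fin n)}

/-- With `c = f_⋆⋆ u`: off the listed sets, `f (flip (flip u i) j)` is a common neighbour of
`flip c (π i)` and `flip c (π j)` other than `c`, so it is the image of `flip (flip u i) j` under
`cubeEquiv u c π`. -/
lemma setOf_ne_cubeEquiv_subset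
    (hπ : ∀ i ∈ G, dualF n f (flip u i) = flip (dualF n (dualF n f) u) (π i)) :
    {w ∈ ball n u 2 | f w ≠ cubeEquiv u (dualF n (dualF n f) u) π w} ⊆
      insert u (nbhd n u) ∪ (⋃ i ∈ Gᶜ, nbhd n (flip u i)) ∪ (⋃ i, strayNbrs f (flip u i)) ∪
        f ⁻¹' {dualF n (dualF n f) u} := by
  rintro w ⟨hw, hfw⟩
  rcases eq_or_mem_nbhd_or_eq_flip_flip (mem_ball_iff.1 hw) with rfl | hw1 | ⟨i, j, hij, rfl⟩
  · exact .inl (.inl (.inl (mem_insert _ _)))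
  · exact .inl (.inl (.inl (mem_insert_of_mem _ hw1)))
  by_contra hout
  simp only [mem_union, mem_iUnion, mem_preimage, mem_singleton_iff, not_or] at hout
  obtain ⟨⟨⟨-, hG⟩, hstray⟩, hfc⟩ := hout
  have hG' : ∀ k, flip (flip u i) j ∈ nbhd n (flip u k) → k ∈ G := fun k h =>
    not_not.1 fun hk => hG ⟨k, Finset.mem_compl.2 hk, h⟩
  have hiG := hG' i (flip_mem_nbhd _ _)
  have hjG := hG' j (flip_comm u j i ▸ flip_mem_nbhd _ _)
  have hi := apply_mem_nbhd_dualF (flip_mem_nbhd (flip u i) j) fun h => hstray ⟨i, h⟩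
  have hj := apply_mem_nbhd_dualF (flip_mem_nbhd (flip u j) i) fun h =>
    hstray ⟨j, flip_comm u i j ▸ h⟩
  rw [hπ i hiG] at hi
  rw [← flip_comm, hπ j hjG] at hj
  rcases eq_or_eq_of_mem_nbhd_flip_inter (π.injective.ne hij) hi hj with h | h
  · exact hfc h
  · exact hfw (by rw [h, cubeEquiv_flip, cubeEquiv_flip, cubeEquiv_self])

lemma ncard_setOf_ne_cubeEquiv_le (hf : Injective f) {s : ℕ}
    (hdual : ∀ v, n ≤ overlap f v (dualF n f v) + s)
    (hπ : ∀ i ∈ G, dualF n f (flip u i) = flip (dualF n (dualF n f) u) (π i)) :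
    {w ∈ ball n u 2 | f w ≠ cubeEquiv u (dualF n (dualF n f) u) π w}.ncard ≤
      n + 2 + #Gᶜ * n + n * s := by
  refine (ncard_le_ncard (setOf_ne_cubeEquiv_subset hπ)).trans ?_
  have h₁ := ncard_insert_le u (nbhd n u)
  have h₂ : (⋃ i ∈ Gᶜ, nbhd n (flip u i)).ncard ≤ #Gᶜ * n :=
    (Finset.set_ncard_biUnion_le _ _).trans (by simp [ncard_nbhd])
  have h₃ : (⋃ i, strayNbrs f (flip u i)).ncard ≤ n * s :=
    (ncard_iUnion_le_of_fintype _).trans <| (Finset.sum_le_sum fun i _ =>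
      ncard_strayNbrs_le hf hdual (flip u i)).trans (by simp)
  have h₄ : (f ⁻¹' {dualF n (dualF n f) u}).ncard ≤ 1 :=
    (ncard_le_one (toFinite _)).2 fun a ha b hb => hf (ha.trans hb.symm)
  have := ncard_union_le (insert u (nbhd n u) ∪ (⋃ i ∈ Gᶜ, nbhd n (flip u i)) ∪
    (⋃ i, strayNbrs f (flip u i))) (f ⁻¹' {dualF n (dualF n f) u})
  have := ncard_union_le (insert u (nbhd n u) ∪ (⋃ i ∈ Gᶜ, nbhd n (flip u i)))
    (⋃ i, strayNbrs f (flip u i))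
  have := ncard_union_le (insert u (nbhd n u)) (⋃ i ∈ Gᶜ, nbhd n (flip u i))
  rw [ncard_nbhd] at h₁
  omega

end Mismatch

theorem exists_isometry_ncard_ne_le {f : V n → V n} (hf : Injective f) {s : ℕ}
    (hdual : ∀ v, n ≤ overlap f v (dualF n f v) + s) (hs : 1 ≤ s) (hsn : 100 * s ≤ n)
    (u : V n) : ∃ e : V n ≃ V n, (∀ x y, hammingDist (e x) (e y) = hammingDist x y) ∧
      e u = dualF n (dualF n f) u ∧ {w ∈ ball n u 2 | f w ≠ e w}.ncard ≤ 52 * (n * s) := by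
  obtain ⟨π, hπ⟩ := exists_perm_dualF_flip_eq hf hdual hs hsn u
  refine ⟨cubeEquiv u _ π, hammingDist_cubeEquiv u _ π, cubeEquiv_self u _ π,
    (ncard_setOf_ne_cubeEquiv_le hf hdual hπ).trans ?_⟩
  have hG := card_goodCoords hf hdual (dualF_injective hf hdual (by omega)) u
  have hGc : #(goodCoords f u)ᶜ ≤ 32 * s + 16 := by
    rw [Finset.card_compl, Fintype.card_fin]; omega
  have := Nat.mul_le_mul_right n hGc
  have := Nat.mul_le_mul_left n hs
  nlinarith

def ballIsoOfIsometry (e : V n ≃ V n) (he : ∀ x y, hammingDist (e x) (e y) = hammingDist x y)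
    {a b : V n} (hab : e a = b) (r : ℕ) :
    (Q n).induce (ball n a r) ≃g (Q n).induce (ball n b r) where
  toEquiv := e.subtypeEquiv fun x => by rw [mem_ball_iff, mem_ball_iff, ← hab, he]
  map_rel_iff' {x y} := by
    simp only [SimpleGraph.comap_adj, Function.Embedding.subtype_apply, Equiv.subtypeEquiv_apply,
      adj_iff, he]

lemma ballDistLE_ncard_setOf_ne {C : Type} {r : ℕ} {χ : V n → C} {f e : V n ≃ V n}
    (hχ : f ∈ IsomSet n r χ) (he : ∀ x y, hammingDist (e x) (e y) = hammingDist x y)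
    {u v : V n} (heu : e u = f v) :
    BallDistLE n r χ χ v u {w ∈ ball n u r | f w ≠ e w}.ncard := by
  obtain ⟨φ, hφ⟩ := hχ v
  set ψ := ballIsoOfIsometry e he heu r
  have hψ : ∀ x, e (ψ.symm (φ x)).1 = (φ x).1 := fun x =>
    congrArg Subtype.val (ψ.apply_symm_apply (φ x))
  refine ⟨φ.trans ψ.symm, ?_⟩
  refine Nat.cast_le.2 (ncard_le_ncard_of_injOn (fun x => ((φ.trans ψ.symm) x).1)
    (fun x hx => ⟨((φ.trans ψ.symm) x).2, fun hfe => hx ?_⟩)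
    (fun a _ b _ h => (φ.trans ψ.symm).injective (Subtype.ext h)))
  simp only [RelIso.trans_apply] at hfe ⊢
  rw [hφ x, ← hψ x, ← hfe]
  exact congrArg χ (f.symm_apply_apply _)

end Hypercube

/-- Lemma 3.16 (f-h-inverse): if `f` is `s(n)`-approximately local and `f ∈ Isom^(2)(χ)`,
then for every `v`, `d(χ^(2)(v), χ^(2)(f_⋆⋆⁻¹(f(v)))) ≤ C n s(n)`. -/
theorem two_ball_close_to_double_dual
    (s : ℕ → ℕ) (hs : Tendsto s atTop atTop)
    (hso : (fun n => (s n : ℝ)) =o[atTop] fun n => (n : ℝ)) :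
    ∃ C : ℝ, 0 < C ∧ ∃ N : ℕ, ∀ n : ℕ, N ≤ n → ∀ f : V n ≃ V n,
      ApproxLocalF n (s n) ⇑f →
      ∀ χ : V n → Bool, f ∈ IsomSet n 2 χ →
      ∀ v u : V n, dualF n (dualF n ⇑f) u = f v →
        BallDistLE n 2 χ χ v u (C * n * s n) := by
  obtain ⟨N, hN⟩ := eventually_atTop.1
    ((hs.eventually_ge_atTop 1).and (hso.def (by norm_num : (0 : ℝ) < 1 / 100)))
  refine ⟨52, by norm_num, N, fun n hn f hf χ hχ v u hvu => ?_⟩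
  obtain ⟨hs1, hsn⟩ := hN n hn
  have hsn : 100 * s n ≤ n := by
    rw [Real.norm_natCast, Real.norm_natCast] at hsn
    exact_mod_cast (by linarith : (100 * s n : ℝ) ≤ n)
  obtain ⟨e, he, heu, hcount⟩ := Hypercube.exists_isometry_ncard_ne_le f.injective
    (Hypercube.le_overlap_dualF_add hf) hs1 hsn u
  obtain ⟨φ, hφ⟩ := Hypercube.ballDistLE_ncard_setOf_ne hχ he (heu.trans hvu)
  refine ⟨φ, hφ.trans ?_⟩
  calc _ ≤ ((52 * (n * s n) : ℕ) : ℝ) := by exact_mod_cast hcount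
    _ = 52 * n * s n := by push_cast; ring

end
end

section
/- Let δ, ε > 0 be such that 2·ε·δ < 1/10!. Then for all sufficiently large n, there exists a collection of pairwise disjoint sets A_1, …, A_{⌈ε·n⁶⌉} such that each A_i is a 6-spread subset of the set of vertices of Q_n of Hamming weight exactly 10, and |A_i| = ⌈δ·n⁴⌉ for each i. -/
open MeasureTheory Filter Set Asymptotics Topology

noncomputable section

/-- The Hamming ball of radius 5 has at most `6 n^5` elements (for `n ≥ 1`). -/
lemma ball5_card_le {n : ℕ} (hn : 1 ≤ n) (v : V n) :
    (Finset.univ.filter fun w : V n => hammingDist v w ≤ 5).card ≤ 6 * n ^ 5 := by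
  classical
  have hsub : ∀ w : V n, hammingDist v w ≤ 5 →
      (Finset.univ.filter fun i => v i ≠ w i) ∈
        (Finset.range 6).biUnion fun j =>
          Finset.powersetCard j (Finset.univ : Finset (Fin n)) := by
    intro w hw
    rw [Finset.mem_biUnion]
    exact ⟨hammingDist v w, Finset.mem_range.mpr (Nat.lt_succ_of_le hw),
      Finset.mem_powersetCard.mpr ⟨Finset.subset_univ _, rfl⟩⟩
  have hinj : Set.InjOn (fun w : V n => Finset.univ.filter fun i => v i ≠ w i)
      ↑(Finset.univ.filter fun w : V n => hammingDist v w ≤ 5) := by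
    intro a _ b _ hab
    funext i
    have h1 := Finset.ext_iff.mp hab i
    simp only [Finset.mem_filter, Finset.mem_univ, true_and] at h1
    revert h1
    cases v i <;> cases a i <;> cases b i <;> simp
  calc (Finset.univ.filter fun w : V n => hammingDist v w ≤ 5).card
      ≤ ((Finset.range 6).biUnion fun j =>
          Finset.powersetCard j (Finset.univ : Finset (Fin n))).card :=
        Finset.card_le_card_of_injOn _
          (fun w hw => hsub w (Finset.mem_filter.mp hw).2) hinj
    _ ≤ ∑ j ∈ Finset.range 6,
          (Finset.powersetCard j (Finset.univ : Finset (Fin n))).card :=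
        Finset.card_biUnion_le
    _ ≤ ∑ _j ∈ Finset.range 6, n ^ 5 := by
        refine Finset.sum_le_sum fun j hj => ?_
        rw [Finset.card_powersetCard, Finset.card_univ, Fintype.card_fin]
        exact (Nat.choose_le_pow n j).trans
          (Nat.pow_le_pow_right hn (Nat.lt_succ_iff.mp (Finset.mem_range.mp hj)))
    _ = 6 * n ^ 5 := by simp

/-- Greedy construction of a single 6-spread subset. -/
lemma greedy_one {n : ℕ} (B : ℕ) (hB : 1 ≤ B)
    (hball : ∀ v : V n,
      (Finset.univ.filter fun w : V n => hammingDist v w ≤ 5).card ≤ B) :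
    ∀ (m : ℕ) (P : Finset (V n)), B * m ≤ P.card →
      ∃ A : Finset (V n), A ⊆ P ∧ A.card = m ∧
        ∀ u ∈ A, ∀ w ∈ A, u ≠ w → 6 ≤ hammingDist u w := by
  intro m
  induction m with
  | zero => exact fun P _ => ⟨∅, by simp, by simp, by simp⟩
  | succ m ih =>
    intro P hP
    have hpos : 0 < P.card := lt_of_lt_of_le (Nat.mul_pos hB (Nat.succ_pos m)) hP
    obtain ⟨v, hv⟩ := Finset.card_pos.mp hpos
    have hsplit : (P.filter fun w => hammingDist v w ≤ 5).card
        + (P.filter fun w => ¬ hammingDist v w ≤ 5).card = P.card :=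
      Finset.card_filter_add_card_filter_not _
    have hnear_le : (P.filter fun w => hammingDist v w ≤ 5).card ≤ B :=
      le_trans (Finset.card_le_card
        (Finset.filter_subset_filter _ (Finset.subset_univ P))) (hball v)
    have hcard' : B * m ≤ (P.filter fun w => ¬ hammingDist v w ≤ 5).card := by
      have h1 : B * m + B ≤ (P.filter fun w => hammingDist v w ≤ 5).card
          + (P.filter fun w => ¬ hammingDist v w ≤ 5).card := by
        rw [hsplit]
        calc B * m + B = B * (m + 1) := by ring
          _ ≤ P.card := hP
      linarith
    obtain ⟨A', hA'P, hA'card, hA'spread⟩ := ih _ hcard'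
    have hvP' : v ∉ (P.filter fun w => ¬ hammingDist v w ≤ 5) := by
      simp [hammingDist_self]
    have hvA' : v ∉ A' := fun hc => hvP' (hA'P hc)
    refine ⟨insert v A', ?_, ?_, ?_⟩
    · exact Finset.insert_subset hv (hA'P.trans (Finset.filter_subset _ _))
    · rw [Finset.card_insert_of_notMem hvA', hA'card]
    · intro u hu w hw huw
      rcases Finset.mem_insert.mp hu with rfl | hu' <;>
        rcases Finset.mem_insert.mp hw with rfl | hw'
      · exact absurd rfl huw
      · have := (Finset.mem_filter.mp (hA'P hw')).2
        omega
      · have := (Finset.mem_filter.mp (hA'P hu')).2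
        rw [hammingDist_comm]
        omega
      · exact hA'spread u hu' w hw' huw

/-- Greedy construction of many disjoint 6-spread subsets. -/
lemma greedy_many {n : ℕ} (B m : ℕ) (hB : 1 ≤ B)
    (hball : ∀ v : V n,
      (Finset.univ.filter fun w : V n => hammingDist v w ≤ 5).card ≤ B) :
    ∀ (k : ℕ) (P : Finset (V n)), m * k + B * m ≤ P.card →
      ∃ A : Fin k → Finset (V n), (∀ i, A i ⊆ P) ∧
        (Pairwise fun i j => Disjoint (A i) (A j)) ∧
        ∀ i, (A i).card = m ∧
          ∀ u ∈ A i, ∀ w ∈ A i, u ≠ w → 6 ≤ hammingDist u w := by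
  intro k
  induction k with
  | zero =>
    intro P _
    refine ⟨Fin.elim0, fun i => i.elim0, ?_, fun i => i.elim0⟩
    intro i j _
    exact i.elim0
  | succ k ih =>
    intro P hP
    obtain ⟨A₀, hA₀P, hA₀card, hA₀spread⟩ :=
      greedy_one B hB hball m P (le_trans (Nat.le_add_left _ _) hP)
    have hcard' : m * k + B * m ≤ (P \ A₀).card := by
      rw [Finset.card_sdiff_of_subset hA₀P, hA₀card]
      refine Nat.le_sub_of_add_le ?_
      calc m * k + B * m + m = m * (k + 1) + B * m := by ring
        _ ≤ P.card := hP
    obtain ⟨A, hAsub, hApair, hAprop⟩ := ih (P \ A₀) hcard'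
    have hdisj0 : ∀ j, Disjoint A₀ (A j) := fun j =>
      Finset.disjoint_left.mpr fun x hx hx' =>
        (Finset.mem_sdiff.mp (hAsub j hx')).2 hx
    refine ⟨Fin.cons A₀ A, ?_, ?_, ?_⟩
    · intro i
      rcases Fin.eq_zero_or_eq_succ i with rfl | ⟨i', rfl⟩
      · simpa using hA₀P
      · simpa using (hAsub i').trans Finset.sdiff_subset
    · intro i j hij
      rcases Fin.eq_zero_or_eq_succ i with rfl | ⟨i', rfl⟩ <;>
        rcases Fin.eq_zero_or_eq_succ j with rfl | ⟨j', rfl⟩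
      · exact absurd rfl hij
      · simpa using hdisj0 j'
      · simpa using (hdisj0 i').symm
      · have hne : i' ≠ j' := fun hc => hij (by rw [hc])
        simpa using hApair hne
    · intro i
      rcases Fin.eq_zero_or_eq_succ i with rfl | ⟨i', rfl⟩
      · simpa using ⟨hA₀card, hA₀spread⟩
      · simpa using hAprop i'

/-- The tenth layer of the hypercube has exactly `n.choose 10` vertices. -/
lemma layer_card (n : ℕ) :
    (Finset.univ.filter fun v : V n =>
      hammingDist v (fun _ => false) = 10).card = n.choose 10 := by
  classical
  have hdist : ∀ v : V n, hammingDist v (fun _ => false)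
      = (Finset.univ.filter fun i => v i = true).card := by
    intro v
    simp [hammingDist]
  rw [show n.choose 10
      = (Finset.powersetCard 10 (Finset.univ : Finset (Fin n))).card by
    rw [Finset.card_powersetCard, Finset.card_univ, Fintype.card_fin]]
  refine Finset.card_bij' (fun v _ => Finset.univ.filter fun i => v i = true)
    (fun s _ => fun i => decide (i ∈ s)) ?_ ?_ ?_ ?_
  · intro v hv
    refine Finset.mem_powersetCard.mpr ⟨Finset.subset_univ _, ?_⟩
    have := (Finset.mem_filter.mp hv).2
    rw [hdist] at this
    exact this
  · intro s hs
    refine Finset.mem_filter.mpr ⟨Finset.mem_univ _, ?_⟩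
    rw [hdist]
    rw [show (Finset.univ.filter fun i => decide (i ∈ s) = true) = s by
      ext i; simp]
    exact (Finset.mem_powersetCard.mp hs).2
  · intro v _
    funext i
    simp
  · intro s _
    ext i
    simp

/-- Proposition 4.1 (greedycovering): disjoint `6`-spread subsets of the tenth layer of the
hypercube, `⌈ε n⁶⌉` of them, each of size `⌈δ n⁴⌉`. -/
theorem spread_covering
    (δ ε : ℝ) (hδ : 0 < δ) (hε : 0 < ε)
    (h : 2 * ε * δ < 1 / (Nat.factorial 10 : ℝ)) :
    ∀ᶠ n : ℕ in atTop, ∃ A : Fin ⌈ε * (n : ℝ) ^ 6⌉₊ → Set (V n),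
      (Pairwise fun i j => Disjoint (A i) (A j)) ∧
      ∀ i, (∀ v ∈ A i, hammingDist v (fun _ => false) = 10) ∧
        (∀ u ∈ A i, ∀ w ∈ A i, u ≠ w → 6 ≤ hammingDist u w) ∧
        (A i).ncard = ⌈δ * (n : ℝ) ^ 4⌉₊ := by
  classical
  have hF9 : (Nat.factorial 10 : ℝ) = 3628800 := by norm_num [Nat.factorial]
  rw [hF9] at h
  have hc : (0:ℝ) < 1/3628800 - ε * δ := by nlinarith
  have hev : ∀ᶠ n : ℕ in atTop,
      max 9 (max 1 ((ε + 7*δ + 97) / (1/3628800 - ε*δ))) ≤ (n : ℝ) :=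
    tendsto_natCast_atTop_atTop.eventually_ge_atTop _
  filter_upwards [hev] with n hn
  have hx9 : (9:ℝ) ≤ (n:ℝ) := le_trans (le_max_left _ _) hn
  have hx1 : (1:ℝ) ≤ (n:ℝ) :=
    le_trans (le_trans (le_max_left _ _) (le_max_right _ _)) hn
  have hx0 : (0:ℝ) < (n:ℝ) := by linarith
  have hcx : ε + 7*δ + 97 ≤ (1/3628800 - ε*δ) * (n:ℝ) := by
    have h0 := le_trans (le_trans (le_max_right _ _) (le_max_right _ _)) hn
    have h1 := (div_le_iff₀ hc).mp h0
    linarith [h1]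
  have hn1 : 1 ≤ n := by exact_mod_cast hx1
  have hn9 : 9 ≤ n := by exact_mod_cast hx9
  -- Bernoulli-type bound : (x - 9)^10 ≥ x^10 - 90 x^9
  have hber : (n:ℝ)^10 - 90*(n:ℝ)^9 ≤ ((n:ℝ) - 9)^10 := by
    have hq : (-2:ℝ) ≤ -(9/(n:ℝ)) := by
      have h2 : 9/(n:ℝ) ≤ 1 := (div_le_one hx0).mpr hx9
      have h3 : 0 < 9/(n:ℝ) := by positivity
      linarith
    have hber0 := one_add_mul_le_pow hq 10
    push_cast at hber0
    have h1 : (1 + 10 * (-(9/(n:ℝ)))) * (n:ℝ)^10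
        ≤ (1 + -(9/(n:ℝ)))^10 * (n:ℝ)^10 :=
      mul_le_mul_of_nonneg_right hber0 (by positivity)
    have e1 : (1 + 10 * (-(9/(n:ℝ)))) * (n:ℝ)^10 = (n:ℝ)^10 - 90*(n:ℝ)^9 := by
      field_simp
      ring
    have e2 : (1 + -(9/(n:ℝ)))^10 * (n:ℝ)^10 = ((n:ℝ) - 9)^10 := by
      rw [← mul_pow]
      congr 1
      field_simp
      ring
    rw [e1, e2] at h1
    exact h1
  -- lower bound on the binomial coefficient
  have hchoose : ((n:ℝ) - 9)^10 / 3628800 ≤ (n.choose 10 : ℝ) := by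
    have h1 := Nat.pow_le_choose (α := ℝ) 10 n
    rw [show n + 1 - 10 = n - 9 from by omega, Nat.cast_sub hn9, hF9] at h1
    push_cast at h1
    exact h1
  -- ceiling bounds
  have hm1 : (⌈δ * (n:ℝ)^4⌉₊ : ℝ) ≤ δ*(n:ℝ)^4 + 1 :=
    (Nat.ceil_lt_add_one (by positivity)).le
  have hk1 : (⌈ε * (n:ℝ)^6⌉₊ : ℝ) ≤ ε*(n:ℝ)^6 + 1 :=
    (Nat.ceil_lt_add_one (by positivity)).le
  -- main counting inequality
  have hmain : ⌈δ * (n:ℝ)^4⌉₊ * ⌈ε * (n:ℝ)^6⌉₊ + (6*n^5) * ⌈δ * (n:ℝ)^4⌉₊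
      ≤ n.choose 10 := by
    rw [← @Nat.cast_le ℝ]
    push_cast
    have p1 : (⌈δ * (n:ℝ)^4⌉₊ : ℝ) * ⌈ε * (n:ℝ)^6⌉₊
        ≤ (δ*(n:ℝ)^4+1) * (ε*(n:ℝ)^6+1) :=
      mul_le_mul hm1 hk1 (Nat.cast_nonneg _) (by positivity)
    have p2 : 6*(n:ℝ)^5 * (⌈δ * (n:ℝ)^4⌉₊:ℝ) ≤ 6*(n:ℝ)^5*(δ*(n:ℝ)^4+1) :=
      mul_le_mul_of_nonneg_left hm1 (by positivity)
    have c4 : (n:ℝ)^4 ≤ (n:ℝ)^9 := pow_le_pow_right₀ hx1 (by norm_num)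
    have c5 : (n:ℝ)^5 ≤ (n:ℝ)^9 := pow_le_pow_right₀ hx1 (by norm_num)
    have c6 : (n:ℝ)^6 ≤ (n:ℝ)^9 := pow_le_pow_right₀ hx1 (by norm_num)
    have c0 : (1:ℝ) ≤ (n:ℝ)^9 := one_le_pow₀ hx1
    have hb2 : (δ*(n:ℝ)^4+1) * (ε*(n:ℝ)^6+1) + 6*(n:ℝ)^5*(δ*(n:ℝ)^4+1)
        ≤ ε*δ*(n:ℝ)^10 + (ε + 7*δ + 7)*(n:ℝ)^9 := by
      nlinarith [mul_le_mul_of_nonneg_left c4 hδ.le,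
        mul_le_mul_of_nonneg_left c6 hε.le,
        mul_le_mul_of_nonneg_left c5 (by norm_num : (0:ℝ) ≤ 6),
        mul_le_mul_of_nonneg_left c5 (mul_nonneg (by norm_num : (0:ℝ) ≤ 6) hδ.le), c0]
    have hb3 : ε*δ*(n:ℝ)^10 + (ε + 7*δ + 7)*(n:ℝ)^9
        ≤ ((n:ℝ)^10 - 90*(n:ℝ)^9)/3628800 := by
      rw [le_div_iff₀ (by norm_num : (0:ℝ) < 3628800)]
      nlinarith [mul_le_mul_of_nonneg_right hcx
        (by positivity : (0:ℝ) ≤ 3628800 * (n:ℝ)^9),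
        pow_nonneg hx0.le 9]
    have hb4 : ((n:ℝ)^10 - 90*(n:ℝ)^9)/3628800 ≤ ((n:ℝ) - 9)^10/3628800 := by
      linarith [hber]
    linarith [p1, p2, hb2, hb3, hb4, hchoose]
  -- apply the greedy construction
  have hB6 : 1 ≤ 6 * n ^ 5 := by
    have h1 : 1 ≤ n ^ 5 := Nat.one_le_pow 5 n hn1
    omega
  obtain ⟨A, hsub, hpair, hprop⟩ :=
    greedy_many (6*n^5) ⌈δ * (n:ℝ)^4⌉₊ hB6 (fun v => ball5_card_le hn1 v)
      ⌈ε * (n:ℝ)^6⌉₊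
      (Finset.univ.filter fun v : V n => hammingDist v (fun _ => false) = 10)
      (by rw [layer_card]; exact hmain)
  refine ⟨fun i => ↑(A i), ?_, ?_⟩
  · intro i j hij
    exact Finset.disjoint_coe.mpr (hpair hij)
  · intro i
    refine ⟨?_, ?_, ?_⟩
    · intro v hv
      exact (Finset.mem_filter.mp (hsub i (Finset.mem_coe.mp hv))).2
    · intro u hu w hw huw
      exact (hprop i).2 u (Finset.mem_coe.mp hu) w (Finset.mem_coe.mp hw) huw
    · rw [Set.ncard_coe_finset]
      exact (hprop i).1

end
end
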